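/- arXiv:1709.04208 — 6 statements merged into one kernel-verified Lean document; each statement's English description precedes it below -/
import Mathlib

section
/- Let n ≥ 1, p ∈ [1,∞) and ρ ∈ (0,1). There exists a constant c ≥ 1, depending only on p, n and ρ, with the following property. For all R > r > 0 with r/R = ρ, every x* ∈ ℝⁿ, every Lebesgue-measurable set ω ⊆ Q_R(x*) with |ω| ≤ (R−r)ⁿ/2^{n+1}, every affine map A: ℝⁿ → ℝⁿ, and every u ∈ L^∞(Q_R(x*); ℝⁿ), there exists an affine map a: ℝⁿ → ℝⁿ such that (i) sup_{x ∈ Q_r(x*)} |a(x)| ≤ ess sup_{x ∈ Q_R(x*)} |u(x)|, (ii) ‖u − a‖_{L^p(Q_R(x*)∖ω; ℝⁿ)} ≤ c ‖u − A‖_{L^p(Q_R(x*)∖ω; ℝⁿ)}, and (iii) if the linear part of A is skew-symmetric then the linear part of a is skew-symmetric. -/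
open MeasureTheory Set
open scoped RealInnerProductSpace ENNReal

/-!
Let `s` be the maximum of `‖A‖` on the closed cube `Q̄_r(x*)`, attained at `x₁`, and
`M = ‖u‖_∞`. If `s ≤ M` take `a = A`; otherwise take `a = (M / s) • A`, whose linear part is
still skew when that of `A` is. As `A` is affine and bounded by `s` on `Q_r = Q_{ρR}`, it is
bounded by `3s/ρ` on `Q_R`, so `|A - a| ≤ 3(s - M)/ρ` there. Conversely `|A| ≥ s` on the
half-space `{⟪A x, A x₁⟫ ≥ s²}` through `x₁`, which contains at least half of the centrally
symmetric cube `Q_{R-r}(x₁) ⊆ Q_R`; after removing `ω`, a set of measure `≳ (R - r)ⁿ` remains on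
which `|u - A| ≥ s - M`. Comparing the two bounds controls `‖A - a‖_{L^p}` by `‖u - A‖_{L^p}`,
and the triangle inequality concludes.
-/

def cube {ι : Type*} (c : EuclideanSpace ℝ ι) (h : ℝ) : Set (EuclideanSpace ℝ ι) :=
  {x | ∀ i, |x i - c i| < h / 2}

def closedCube {ι : Type*} (c : EuclideanSpace ℝ ι) (h : ℝ) : Set (EuclideanSpace ℝ ι) :=
  {x | ∀ i, |x i - c i| ≤ h / 2}

section Cube

variable {ι : Type*}

theorem center_mem_closedCube (c : EuclideanSpace ℝ ι) {h : ℝ} (hh : 0 ≤ h) :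
    c ∈ closedCube c h := fun i => by simp only [sub_self, abs_zero]; positivity

theorem cube_subset_cube {x₀ x₁ : EuclideanSpace ℝ ι} {r R : ℝ}
    (hx₁ : x₁ ∈ closedCube x₀ r) : cube x₁ (R - r) ⊆ cube x₀ R := fun x hx i => by
  have := abs_sub_le (x i) (x₁ i) (x₀ i)
  linarith [hx i, hx₁ i]

theorem lineMap_mem_closedCube {x₀ x : EuclideanSpace ℝ ι} {R ρ : ℝ}
    (hx : x ∈ cube x₀ R) (hρ : 0 ≤ ρ) :
    AffineMap.lineMap x₀ x ρ ∈ closedCube x₀ (ρ * R) := fun i => by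
  simp only [AffineMap.lineMap_apply_module', PiLp.add_apply, PiLp.smul_apply, PiLp.sub_apply,
    smul_eq_mul, add_sub_cancel_right, abs_mul, abs_of_nonneg hρ]
  nlinarith [hx i]

theorem two_nsmul_sub_mem_cube {c x : EuclideanSpace ℝ ι} {h : ℝ}
    (hx : x ∈ cube c h) : 2 • c - x ∈ cube c h := fun i => by
  have : (2 • c - x) i - c i = -(x i - c i) := by
    simp only [PiLp.sub_apply, PiLp.smul_apply, nsmul_eq_mul]; ring
  rw [this, abs_neg]
  exact hx i

variable [Fintype ι]

theorem cube_eq_preimage_ball (c : EuclideanSpace ℝ ι) {h : ℝ} (hh : 0 < h) :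
    cube c h = WithLp.ofLp ⁻¹' Metric.ball (WithLp.ofLp c) (h / 2) := by
  ext x
  simp only [cube, mem_ofPred_eq, mem_preimage, Metric.mem_ball, dist_pi_lt_iff (half_pos hh),
    Real.dist_eq]

theorem closedCube_eq_preimage_closedBall (c : EuclideanSpace ℝ ι) {h : ℝ} (hh : 0 ≤ h) :
    closedCube c h = WithLp.ofLp ⁻¹' Metric.closedBall (WithLp.ofLp c) (h / 2) := by
  ext x
  simp only [closedCube, mem_ofPred_eq, mem_preimage, Metric.mem_closedBall,
    dist_pi_le_iff (by positivity : (0:ℝ) ≤ h / 2), Real.dist_eq]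

theorem isOpen_cube (c : EuclideanSpace ℝ ι) {h : ℝ} (hh : 0 < h) : IsOpen (cube c h) := by
  rw [cube_eq_preimage_ball c hh]
  exact Metric.isOpen_ball.preimage (PiLp.continuous_ofLp 2 _)

theorem volume_cube (c : EuclideanSpace ℝ ι) {h : ℝ} (hh : 0 < h) :
    volume (cube c h) = ENNReal.ofReal (h ^ Fintype.card ι) := by
  rw [cube_eq_preimage_ball c hh, (PiLp.volume_preserving_ofLp ι).measure_preimage
    measurableSet_ball.nullMeasurableSet, Real.volume_pi_ball _ (half_pos hh),
    mul_div_cancel₀ _ two_ne_zero]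

theorem isCompact_closedCube (c : EuclideanSpace ℝ ι) {h : ℝ} (hh : 0 ≤ h) :
    IsCompact (closedCube c h) := by
  rw [closedCube_eq_preimage_closedBall c hh]
  exact (PiLp.homeomorph 2 _).isCompact_preimage.mpr (isCompact_closedBall _ _)

end Cube

theorem AffineMap.mul_norm_le_of_norm_lineMap_le {E F : Type*} [AddCommGroup E] [Module ℝ E]
    [NormedAddCommGroup F] [NormedSpace ℝ F] (A : E →ᵃ[ℝ] F) {x₀ x : E} {ρ s : ℝ}
    (hρ0 : 0 ≤ ρ) (hρ1 : ρ ≤ 1) (h₀ : ‖A x₀‖ ≤ s) (hρ : ‖A (lineMap x₀ x ρ)‖ ≤ s) :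
    ρ * ‖A x‖ ≤ 3 * s := by
  rw [AffineMap.apply_lineMap] at hρ
  have hsplit : ρ • A x = (lineMap (A x₀) (A x) ρ - A x₀) + ρ • A x₀ := by
    rw [AffineMap.lineMap_apply_module', smul_sub]; abel
  calc ρ * ‖A x‖ = ‖ρ • A x‖ := by rw [norm_smul, Real.norm_of_nonneg hρ0]
    _ ≤ ‖lineMap (A x₀) (A x) ρ - A x₀‖ + ‖ρ • A x₀‖ := hsplit ▸ norm_add_le _ _
    _ ≤ ‖lineMap (A x₀) (A x) ρ‖ + ‖A x₀‖ + ρ * ‖A x₀‖ := by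
      rw [norm_smul, Real.norm_of_nonneg hρ0]
      gcongr
      exact norm_sub_le _ _
    _ ≤ 3 * s := by nlinarith [norm_nonneg (A x₀)]

theorem AffineMap.map_two_nsmul_sub {E F : Type*} [AddCommGroup E] [Module ℝ E] [AddCommGroup F]
    [Module ℝ F] (A : E →ᵃ[ℝ] F) (c x : E) : A (2 • c - x) = 2 • A c - A x := by
  calc A (2 • c - x) = A ((c -ᵥ x) +ᵥ c) := by
        rw [vsub_eq_sub, vadd_eq_add, two_nsmul]; abel_nf
    _ = 2 • A c - A x := by
        rw [A.map_vadd, A.linearMap_vsub, vsub_eq_sub, vadd_eq_add, two_nsmul]; abel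

theorem AffineMap.measure_le_two_mul_measure_setOf_norm_le {E F : Type*} [AddCommGroup E]
    [Module ℝ E] [MeasurableSpace E] [MeasurableAdd E] [MeasurableNeg E] {μ : Measure E}
    [μ.IsAddLeftInvariant] [μ.IsNegInvariant] [NormedAddCommGroup F] [InnerProductSpace ℝ F]
    (A : E →ᵃ[ℝ] F) {c : E} {B : Set E} (hB : ∀ x ∈ B, 2 • c - x ∈ B) :
    μ B ≤ 2 * μ {x ∈ B | ‖A c‖ ≤ ‖A x‖} := by
  -- `H` is cut out of `B` by a half-space through `c`, and `x ↦ 2 • c - x` maps `B \ H` into `H`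
  set H := {x ∈ B | ⟪A c, A c⟫ ≤ ⟪A c, A x⟫}
  have hcover : B ⊆ H ∪ (fun x => 2 • c - x) ⁻¹' H := by
    intro x hx
    by_cases hle : ⟪A c, A c⟫ ≤ ⟪A c, A x⟫
    · exact Or.inl ⟨hx, hle⟩
    · refine Or.inr ⟨hB x hx, ?_⟩
      change ⟪A c, A c⟫ ≤ ⟪A c, A (2 • c - x)⟫
      rw [A.map_two_nsmul_sub, two_nsmul, inner_sub_right, inner_add_right]
      linarith
  have hH : H ⊆ {x ∈ B | ‖A c‖ ≤ ‖A x‖} := by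
    rintro x ⟨hx, hle⟩
    refine ⟨hx, ?_⟩
    rw [real_inner_self_eq_norm_mul_norm] at hle
    nlinarith [real_inner_le_norm (A c) (A x), norm_nonneg (A c), norm_nonneg (A x)]
  calc μ B ≤ μ H + μ ((fun x => 2 • c - x) ⁻¹' H) :=
        (measure_mono hcover).trans (measure_union_le _ _)
    _ = 2 * μ H := by
      have hrefl : MeasurePreserving (MeasurableEquiv.subLeft (2 • c)) μ μ :=
        Measure.measurePreserving_sub_left μ _
      rw [two_mul, ← hrefl.measure_preimage_equiv H]
      rfl
    _ ≤ 2 * μ {x ∈ B | ‖A c‖ ≤ ‖A x‖} := by gcongr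

theorem AffineMap.half_volume_cube_le_volume_setOf_norm_le {ι F : Type*} [Fintype ι]
    [NormedAddCommGroup F] [InnerProductSpace ℝ F] (A : EuclideanSpace ℝ ι →ᵃ[ℝ] F)
    (c : EuclideanSpace ℝ ι) (h : ℝ) :
    volume (cube c h) / 2 ≤ volume {x ∈ cube c h | ‖A c‖ ≤ ‖A x‖} :=
  ENNReal.div_le_of_le_mul' <|
    A.measure_le_two_mul_measure_setOf_norm_le fun _ hx => two_nsmul_sub_mem_cube hx

theorem AffineMap.norm_sub_smul_le {E F : Type*} [AddCommGroup E] [Module ℝ E]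
    [NormedAddCommGroup F] [NormedSpace ℝ F] (A : E →ᵃ[ℝ] F) {x : E} {ρ s M C : ℝ}
    (hρ : 0 < ρ) (hM0 : 0 ≤ M) (hMs : M < s) (hx : ρ * ‖A x‖ ≤ C * s) :
    ‖A x - ((M / s) • A) x‖ ≤ C / ρ * (s - M) := by
  have hs : 0 < s := hM0.trans_lt hMs
  have h1 : A x - ((M / s) • A) x = ((s - M) / s) • A x := by
    rw [AffineMap.coe_smul, Pi.smul_apply, ← one_sub_div hs.ne', sub_smul, one_smul]
  rw [h1, norm_smul, Real.norm_of_nonneg (div_nonneg (sub_nonneg.2 hMs.le) hs.le)]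
  field_simp
  nlinarith [mul_le_mul_of_nonneg_left hx (sub_nonneg.2 hMs.le)]

theorem AffineMap.norm_div_norm_smul_apply_le {E F : Type*} [AddCommGroup E] [Module ℝ E]
    [NormedAddCommGroup F] [NormedSpace ℝ F] (A : E →ᵃ[ℝ] F) {x x₁ : E} {M : ℝ} (hM : 0 ≤ M)
    (hx : ‖A x‖ ≤ ‖A x₁‖) : ‖((M / ‖A x₁‖) • A) x‖ ≤ M := by
  rcases (norm_nonneg (A x₁)).eq_or_lt with hs | hs
  · simp [← hs, hM]
  calc ‖((M / ‖A x₁‖) • A) x‖ = M / ‖A x₁‖ * ‖A x‖ := by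
        rw [AffineMap.coe_smul, Pi.smul_apply, norm_smul, Real.norm_of_nonneg (by positivity)]
    _ ≤ M / ‖A x₁‖ * ‖A x₁‖ := by gcongr
    _ = M := div_mul_cancel₀ _ hs.ne'

theorem AffineMap.inner_smul_linear_eq_neg_inner {E : Type*} [NormedAddCommGroup E]
    [InnerProductSpace ℝ E] {A : E →ᵃ[ℝ] E} (hA : ∀ x y, ⟪A.linear x, y⟫ = -⟪x, A.linear y⟫)
    (c : ℝ) (x y : E) : ⟪(c • A).linear x, y⟫ = -⟪x, (c • A).linear y⟫ := by
  simp only [AffineMap.smul_linear, LinearMap.smul_apply, real_inner_smul_left,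
    real_inner_smul_right, hA x y, mul_neg]

theorem measure_diff_le_mul_measure_diff {α : Type*} [MeasurableSpace α] {μ : Measure α}
    {Q S ω : Set α} {q v : ℝ} (hv : 0 < v) (hQ : μ Q ≤ ENNReal.ofReal q)
    (hS : ENNReal.ofReal v ≤ μ S) (hω : μ ω ≤ ENNReal.ofReal (v / 2)) :
    μ (Q \ ω) ≤ ENNReal.ofReal (2 * q / v) * μ (S \ ω) := by
  have hSω : ENNReal.ofReal (v / 2) ≤ μ (S \ ω) :=
    calc ENNReal.ofReal (v / 2) = ENNReal.ofReal v - ENNReal.ofReal (v / 2) := by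
          rw [← ENNReal.ofReal_sub _ (by positivity)]; ring_nf
      _ ≤ μ S - μ ω := tsub_le_tsub hS hω
      _ ≤ μ (S \ ω) := le_measure_sdiff
  calc μ (Q \ ω) ≤ ENNReal.ofReal q := (measure_mono sdiff_subset).trans hQ
    _ = ENNReal.ofReal (2 * q / v) * ENNReal.ofReal (v / 2) := by
      rw [← ENNReal.ofReal_mul' (by positivity)]; field_simp
    _ ≤ ENNReal.ofReal (2 * q / v) * μ (S \ ω) := by gcongr

theorem volume_cube_sdiff_le {ι : Type*} [Fintype ι] {ρ r R : ℝ} (hρ1 : ρ < 1) (hR : 0 < R)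
    (hr : r = ρ * R) {x₀ : EuclideanSpace ℝ ι} {S ω : Set (EuclideanSpace ℝ ι)}
    (hS : S ⊆ cube x₀ R) (hS_vol : ENNReal.ofReal ((R - r) ^ Fintype.card ι / 2) ≤ volume S)
    (hω_vol : volume ω ≤ ENNReal.ofReal ((R - r) ^ Fintype.card ι / 4)) :
    volume (cube x₀ R \ ω) ≤
      ENNReal.ofReal (4 / (1 - ρ) ^ Fintype.card ι) * volume (S ∩ (cube x₀ R \ ω)) := by
  have hρ : 0 < 1 - ρ := sub_pos.2 hρ1
  have hRr : R - r = R * (1 - ρ) := by rw [hr]; ring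
  calc volume (cube x₀ R \ ω)
      ≤ ENNReal.ofReal (2 * R ^ Fintype.card ι / ((R - r) ^ Fintype.card ι / 2)) *
          volume (S \ ω) :=
        measure_diff_le_mul_measure_diff (by rw [hRr]; positivity) (volume_cube x₀ hR).le hS_vol
          (by rwa [div_div, show (2 : ℝ) * 2 = 4 by norm_num])
    _ = ENNReal.ofReal (4 / (1 - ρ) ^ Fintype.card ι) * volume (S \ ω) := by
      rw [hRr, mul_pow]
      congr 2
      field_simp
      norm_num
    _ ≤ _ := by
      gcongr
      exact fun x hx => ⟨hx.1, hS hx.1, hx.2⟩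

theorem div_two_pow_succ_le_div_four {x : ℝ} (hx : 0 ≤ x) {n : ℕ} (hn : 1 ≤ n) :
    x / 2 ^ (n + 1) ≤ x / 4 := by
  gcongr
  calc (4 : ℝ) = 2 ^ 2 := by norm_num
    _ ≤ 2 ^ (n + 1) := pow_le_pow_right₀ (by norm_num) (by omega)

theorem MeasureTheory.MemLp.ae_norm_le_toReal_eLpNorm_top {α E : Type*} [MeasurableSpace α]
    {μ : Measure α} [NormedAddCommGroup E] {f : α → E} (hf : MemLp f ⊤ μ) :
    ∀ᵐ x ∂μ, ‖f x‖ ≤ (eLpNorm f ⊤ μ).toReal := by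
  filter_upwards [ae_le_eLpNormEssSup (f := f)] with x hx
  rw [← eLpNorm_exponent_top] at hx
  simpa only [toReal_enorm] using ENNReal.toReal_mono hf.2.ne hx

theorem eLpNorm_le_mul_of_ae_le_of_ae_le {α E F : Type*} [MeasurableSpace α] {μ : Measure α}
    [NormedAddCommGroup E] [NormedAddCommGroup F] {f : α → E} {g : α → F} {p : ℝ≥0∞}
    (hp0 : p ≠ 0) (hp : p ≠ ⊤) {T : Set α} {K C t : ℝ≥0∞} (hμ : μ univ ≤ K * μ T)
    (hf : ∀ᵐ x ∂μ, ‖f x‖ₑ ≤ C * t) (hg : ∀ᵐ x ∂μ.restrict T, t ≤ ‖g x‖ₑ) :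
    eLpNorm f p μ ≤ K ^ p.toReal⁻¹ * C * eLpNorm g p μ := by
  have hg_lower : t * μ T ^ p.toReal⁻¹ ≤ eLpNorm g p (μ.restrict T) := by
    have h := eLpNorm_mono_enorm_ae (p := p) (f := fun _ => t) hg
    rwa [eLpNorm_const' _ hp0 hp, enorm_eq_self, Measure.restrict_apply_univ, one_div] at h
  calc eLpNorm f p μ ≤ C * t * μ univ ^ p.toReal⁻¹ := eLpNorm_le_of_ae_enorm_bound hf
    _ ≤ C * t * (K * μ T) ^ p.toReal⁻¹ := by gcongr
    _ = K ^ p.toReal⁻¹ * C * (t * μ T ^ p.toReal⁻¹) := by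
      rw [ENNReal.mul_rpow_of_nonneg _ _ (by positivity)]; ring
    _ ≤ K ^ p.toReal⁻¹ * C * eLpNorm g p μ := by
      gcongr
      exact hg_lower.trans (eLpNorm_mono_measure _ Measure.restrict_le_self)

theorem eLpNorm_sub_le_one_add_mul {α E : Type*} [MeasurableSpace α] {μ : Measure α}
    [NormedAddCommGroup E] {f g h : α → E} {p : ℝ≥0∞} (hp : 1 ≤ p) {c : ℝ≥0∞}
    (hfg : AEStronglyMeasurable (fun x => f x - g x) μ)
    (hgh : AEStronglyMeasurable (fun x => g x - h x) μ)
    (h_le : eLpNorm (fun x => g x - h x) p μ ≤ c * eLpNorm (fun x => f x - g x) p μ) :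
    eLpNorm (fun x => f x - h x) p μ ≤ (1 + c) * eLpNorm (fun x => f x - g x) p μ :=
  calc eLpNorm (fun x => f x - h x) p μ
      = eLpNorm ((fun x => f x - g x) + fun x => g x - h x) p μ := by
        simp only [Pi.add_def, sub_add_sub_cancel]
    _ ≤ eLpNorm (fun x => f x - g x) p μ + eLpNorm (fun x => g x - h x) p μ :=
        eLpNorm_add_le hfg hgh hp
    _ ≤ (1 + c) * eLpNorm (fun x => f x - g x) p μ := by
        rw [add_mul, one_mul]; gcongr

theorem eLpNorm_sub_smul_le_of_isMaxOn {ι : Type*} [Fintype ι] {p ρ r R M : ℝ} (hp : 1 ≤ p)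
    (hρ0 : 0 < ρ) (hρ1 : ρ < 1) (hR : 0 < R) (hr : r = ρ * R) {x₀ x₁ : EuclideanSpace ℝ ι}
    {ω : Set (EuclideanSpace ℝ ι)} (hω : MeasurableSet ω)
    (hω_vol : volume ω ≤ ENNReal.ofReal ((R - r) ^ Fintype.card ι / 4))
    (A : EuclideanSpace ℝ ι →ᵃ[ℝ] EuclideanSpace ℝ ι) (hx₁ : x₁ ∈ closedCube x₀ r)
    (hmax : IsMaxOn (fun x => ‖A x‖) (closedCube x₀ r) x₁)
    {u : EuclideanSpace ℝ ι → EuclideanSpace ℝ ι}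
    (hu : AEStronglyMeasurable u (volume.restrict (cube x₀ R)))
    (hM : ∀ᵐ x ∂volume.restrict (cube x₀ R), ‖u x‖ ≤ M) (hM0 : 0 ≤ M) (hMA : M < ‖A x₁‖) :
    eLpNorm (fun x => u x - ((M / ‖A x₁‖) • A) x) (ENNReal.ofReal p)
        (volume.restrict (cube x₀ R \ ω)) ≤
      ENNReal.ofReal (1 + (4 / (1 - ρ) ^ Fintype.card ι) ^ p⁻¹ * (3 / ρ)) *
        eLpNorm (fun x => u x - A x) (ENNReal.ofReal p) (volume.restrict (cube x₀ R \ ω)) := by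
  set d := Fintype.card ι
  set s := ‖A x₁‖
  set μ := volume.restrict (cube x₀ R \ ω)
  set S := {x ∈ cube x₁ (R - r) | s ≤ ‖A x‖}
  have hRr : 0 < R - r := by nlinarith
  have hQω : MeasurableSet (cube x₀ R \ ω) := (isOpen_cube x₀ hR).measurableSet.diff hω
  have hS : MeasurableSet S := (isOpen_cube x₁ hRr).measurableSet.inter
    (measurableSet_le measurable_const A.continuous_of_finiteDimensional.norm.measurable)
  have hgrowth (x) (hx : x ∈ cube x₀ R) : ρ * ‖A x‖ ≤ 3 * s :=
    A.mul_norm_le_of_norm_lineMap_le hρ0.le hρ1.le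
      (hmax (center_mem_closedCube x₀ (by rw [hr]; positivity)))
      (hmax (hr ▸ lineMap_mem_closedCube hx hρ0.le))
  have hS_vol : ENNReal.ofReal ((R - r) ^ d / 2) ≤ volume S := by
    rw [ENNReal.ofReal_div_of_pos two_pos, ENNReal.ofReal_ofNat, ← volume_cube x₁ hRr]
    exact A.half_volume_cube_le_volume_setOf_norm_le x₁ (R - r)
  have hμ : μ univ ≤ ENNReal.ofReal (4 / (1 - ρ) ^ d) * μ S := by
    rw [Measure.restrict_apply_univ, Measure.restrict_apply' hQω]
    exact volume_cube_sdiff_le hρ1 hR hr (fun x hx => cube_subset_cube hx₁ hx.1) hS_vol hω_vol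
  have hAa : ∀ᵐ x ∂μ, ‖A x - ((M / s) • A) x‖ₑ ≤
      ENNReal.ofReal (3 / ρ) * ENNReal.ofReal (s - M) := by
    filter_upwards [ae_restrict_mem hQω] with x hx
    rw [← ENNReal.ofReal_mul (by positivity), ← ofReal_norm]
    exact ENNReal.ofReal_le_ofReal (A.norm_sub_smul_le hρ0 hM0 hMA (hgrowth x hx.1))
  have huA : ∀ᵐ x ∂μ.restrict S, ENNReal.ofReal (s - M) ≤ ‖u x - A x‖ₑ := by
    have hMμ : ∀ᵐ x ∂μ, ‖u x‖ ≤ M := ae_restrict_of_ae_restrict_of_subset sdiff_subset hM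
    filter_upwards [ae_restrict_of_ae hMμ, ae_restrict_mem hS] with x hux hx
    rw [← ofReal_norm, norm_sub_rev]
    exact ENNReal.ofReal_le_ofReal (by linarith [hx.2, norm_sub_norm_le (A x) (u x)])
  have hp0 : ENNReal.ofReal p ≠ 0 := by rw [ne_eq, ENNReal.ofReal_eq_zero]; linarith
  have hK : 0 ≤ 4 / (1 - ρ) ^ d := div_nonneg (by norm_num) (pow_nonneg (by linarith) _)
  have hc : ENNReal.ofReal (1 + (4 / (1 - ρ) ^ d) ^ p⁻¹ * (3 / ρ)) =
      1 + ENNReal.ofReal (4 / (1 - ρ) ^ d) ^ (ENNReal.ofReal p).toReal⁻¹ *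
        ENNReal.ofReal (3 / ρ) := by
    rw [ENNReal.ofReal_add zero_le_one (by positivity), ENNReal.ofReal_one,
      ENNReal.ofReal_mul (by positivity), ENNReal.ofReal_rpow_of_nonneg hK (by positivity),
      ENNReal.toReal_ofReal (by linarith)]
  have hA_meas := A.continuous_of_finiteDimensional.aestronglyMeasurable (μ := μ)
  rw [hc]
  exact eLpNorm_sub_le_one_add_mul (ENNReal.one_le_ofReal.2 hp)
    ((hu.mono_measure (Measure.restrict_mono sdiff_subset le_rfl)).sub hA_meas)
    (hA_meas.sub ((M / s) • A).continuous_of_finiteDimensional.aestronglyMeasurable)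
    (eLpNorm_le_mul_of_ae_le_of_ae_le hp0 ENNReal.ofReal_ne_top hμ hAa huA)

/-- Affine approximation of bounded functions (Lemma A.1 of the paper).
For `n ≥ 1`, `p ∈ [1, ∞)` and `ρ = r/R ∈ (0, 1)` there is `c ≥ 1` depending only on `p, n, ρ`
such that: for all `R > r > 0` with `r/R = ρ`, every center `x*`, every measurable
`ω ⊆ Q_R(x*)` with `|ω| ≤ (R−r)ⁿ/2^{n+1}`, every affine `A : ℝⁿ → ℝⁿ` and every
`u ∈ L^∞(Q_R(x*); ℝⁿ)`, there is an affine `a : ℝⁿ → ℝⁿ` with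
(i) `sup_{Q_r(x*)} |a| ≤ ess sup_{Q_R(x*)} |u|`,
(ii) `‖u − a‖_{L^p(Q_R(x*)∖ω)} ≤ c ‖u − A‖_{L^p(Q_R(x*)∖ω)}`, and
(iii) if the linear part of `A` is skew-symmetric, so is that of `a`. -/
theorem stmt_0 (n : ℕ) (hn : 1 ≤ n) (p : ℝ) (hp : 1 ≤ p) (ρ : ℝ) (hρ : ρ ∈ Set.Ioo (0 : ℝ) 1) :
    ∃ c : ℝ, 1 ≤ c ∧
      ∀ (R r : ℝ), 0 < r → r < R → r / R = ρ →
      ∀ x₀ : EuclideanSpace ℝ (Fin n),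
      ∀ ω : Set (EuclideanSpace ℝ (Fin n)), MeasurableSet ω →
        ω ⊆ {x | ∀ i, |x i - x₀ i| < R / 2} →
        volume ω ≤ ENNReal.ofReal ((R - r) ^ n / 2 ^ (n + 1)) →
      ∀ A : EuclideanSpace ℝ (Fin n) →ᵃ[ℝ] EuclideanSpace ℝ (Fin n),
      ∀ u : EuclideanSpace ℝ (Fin n) → EuclideanSpace ℝ (Fin n),
        MemLp u ⊤ (volume.restrict {x | ∀ i, |x i - x₀ i| < R / 2}) →
        ∃ a : EuclideanSpace ℝ (Fin n) →ᵃ[ℝ] EuclideanSpace ℝ (Fin n),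
          (∀ x : EuclideanSpace ℝ (Fin n), (∀ i, |x i - x₀ i| < r / 2) →
            ENNReal.ofReal ‖a x‖ ≤
              eLpNorm u ⊤ (volume.restrict {x | ∀ i, |x i - x₀ i| < R / 2})) ∧
          eLpNorm (fun x => u x - a x) (ENNReal.ofReal p)
              (volume.restrict ({x | ∀ i, |x i - x₀ i| < R / 2} \ ω)) ≤
            ENNReal.ofReal c *
              eLpNorm (fun x => u x - A x) (ENNReal.ofReal p)
                (volume.restrict ({x | ∀ i, |x i - x₀ i| < R / 2} \ ω)) ∧
          ((∀ x y : EuclideanSpace ℝ (Fin n), ⟪A.linear x, y⟫ = -⟪x, A.linear y⟫) →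
            ∀ x y : EuclideanSpace ℝ (Fin n), ⟪a.linear x, y⟫ = -⟪x, a.linear y⟫) := by
  obtain ⟨hρ0, hρ1⟩ := hρ
  have hK : 0 ≤ 4 / (1 - ρ) ^ n := div_nonneg (by norm_num) (pow_nonneg (by linarith) _)
  have hc : 1 ≤ 1 + (4 / (1 - ρ) ^ n) ^ p⁻¹ * (3 / ρ) :=
    le_add_of_nonneg_right (mul_nonneg (Real.rpow_nonneg hK _) (by positivity))
  refine ⟨_, hc, ?_⟩
  intro R r hr hrR hrρ x₀ ω hω _ hω_vol A u hu
  have hR : 0 < R := hr.trans hrR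
  obtain ⟨x₁, hx₁, hmax⟩ := (isCompact_closedCube x₀ hr.le).exists_isMaxOn
    ⟨x₀, center_mem_closedCube x₀ hr.le⟩ A.continuous_of_finiteDimensional.norm.continuousOn
  set M := (eLpNorm u ⊤ (volume.restrict (cube x₀ R))).toReal
  have hM0 : 0 ≤ M := ENNReal.toReal_nonneg
  have hsup (a : EuclideanSpace ℝ (Fin n) →ᵃ[ℝ] EuclideanSpace ℝ (Fin n))
      (ha : ∀ x ∈ closedCube x₀ r, ‖a x‖ ≤ M) (x) (hx : x ∈ cube x₀ r) :
      ENNReal.ofReal ‖a x‖ ≤ eLpNorm u ⊤ (volume.restrict (cube x₀ R)) :=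
    (ENNReal.ofReal_le_ofReal (ha x fun i => (hx i).le)).trans_eq (ENNReal.ofReal_toReal hu.2.ne)
  rcases le_or_gt ‖A x₁‖ M with hle | hlt
  · exact ⟨A, hsup A fun x hx => (hmax hx).trans hle,
      le_mul_of_one_le_left (by positivity) (ENNReal.one_le_ofReal.2 hc), id⟩
  have hω_vol' : volume ω ≤ ENNReal.ofReal ((R - r) ^ Fintype.card (Fin n) / 4) := by
    rw [Fintype.card_fin]
    exact hω_vol.trans (ENNReal.ofReal_le_ofReal
      (div_two_pow_succ_le_div_four (pow_nonneg (sub_nonneg.2 hrR.le) _) hn))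
  have happrox := eLpNorm_sub_smul_le_of_isMaxOn hp hρ0 hρ1 hR
    (by rw [← hrρ, div_mul_cancel₀ _ hR.ne']) hω hω_vol' A hx₁ hmax hu.1
    hu.ae_norm_le_toReal_eLpNorm_top hM0 hlt
  rw [Fintype.card_fin] at happrox
  exact ⟨(M / ‖A x₁‖) • A, hsup _ fun x hx => A.norm_div_norm_smul_apply_le hM0 (hmax hx), happrox,
    fun hA => AffineMap.inner_smul_linear_eq_neg_inner hA _⟩
end

section
/- Let n, m ≥ 1, 0 < r < R, let v ∈ {−r/2, r/2}ⁿ be a vertex of the cube Q_r = (−r/2, r/2)ⁿ, and set q := ((R+r)/(2r)) v + (−(R−r)/4, (R−r)/4)ⁿ. Let A: ℝⁿ → ℝᵐ be an affine map with |A(v)| = sup_{x ∈ [−r/2, r/2]ⁿ} |A(x)|. Then |A(y)| ≥ |A(v)| for every y ∈ q. -/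
/-!
`x ↦ ‖A x‖` is convex. For `y ∈ q`, the point `v` lies on the segment from some point `x` of the
closed cube to `y`, at parameter `2r / (R + r) > 0`. Since `‖A x‖ ≤ ‖A v‖`, convexity along that
segment forces `‖A v‖ ≤ ‖A y‖`.
-/

open Set

theorem ConvexOn.le_of_isMaxOn_of_lineMap_eq {E : Type*} [AddCommGroup E] [Module ℝ E]
    {f : E → ℝ} (hf : ConvexOn ℝ univ f) {s : Set E} {v x y : E} (hv : IsMaxOn f s v)
    (hx : x ∈ s) {t : ℝ} (ht₀ : 0 < t) (ht₁ : t ≤ 1) (hxy : AffineMap.lineMap x y t = v) :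
    f v ≤ f y := by
  rw [AffineMap.lineMap_apply_module] at hxy
  subst hxy
  exact hf.le_right_of_left_le' (mem_univ x) (mem_univ y) (sub_nonneg.2 ht₁) ht₀
    (sub_add_cancel 1 t) (hv hx)

theorem convexOn_norm_affineMap {E F : Type*} [AddCommGroup E] [Module ℝ E]
    [SeminormedAddCommGroup F] [NormedSpace ℝ F] (A : E →ᵃ[ℝ] F) :
    ConvexOn ℝ univ (fun x => ‖A x‖) :=
  (convexOn_norm convex_univ).comp_affineMap A

theorem exists_mem_cube_lineMap_eq {ι : Type*} {r R : ℝ} (hr : 0 < r) (hrR : r < R)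
    (v y : EuclideanSpace ℝ ι) (hy : ∀ i, |y i - ((R + r) / (2 * r)) * v i| ≤ (R - r) / 4) :
    ∃ x ∈ {x : EuclideanSpace ℝ ι | ∀ i, |x i| ≤ r / 2},
      AffineMap.lineMap x y (2 * r / (R + r)) = v := by
  have hRr : 0 < R - r := sub_pos.2 hrR
  have hRr' : R + r ≠ 0 := by linarith
  -- `x` is chosen so that `(1 - t) x + t y = v` for `t = 2r / (R + r)`, using `t (R + r) / (2r) = 1`
  refine ⟨WithLp.toLp 2 fun i => -(2 * r) * (y i - ((R + r) / (2 * r)) * v i) / (R - r),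
    fun i => ?_, ?_⟩
  · rw [PiLp.toLp_apply, abs_div, abs_mul, abs_neg, abs_of_pos (by positivity : 0 < 2 * r),
      abs_of_pos hRr, div_le_iff₀ hRr]
    nlinarith [hy i]
  · ext i
    rw [AffineMap.lineMap_apply_module, PiLp.add_apply, PiLp.smul_apply, PiLp.smul_apply,
      PiLp.toLp_apply, smul_eq_mul, smul_eq_mul]
    field_simp
    ring

theorem stmt_3_general (n m : ℕ) (r R : ℝ) (hr : 0 < r) (hrR : r < R)
    (v : EuclideanSpace ℝ (Fin n))
    (A : EuclideanSpace ℝ (Fin n) →ᵃ[ℝ] EuclideanSpace ℝ (Fin m))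
    (hA : IsMaxOn (fun x => ‖A x‖) {x : EuclideanSpace ℝ (Fin n) | ∀ i, |x i| ≤ r / 2} v) :
    ∀ y : EuclideanSpace ℝ (Fin n),
      (∀ i, y i - ((R + r) / (2 * r)) * v i ∈ Set.Ioo (-((R - r) / 4)) ((R - r) / 4)) →
      ‖A v‖ ≤ ‖A y‖ := by
  intro y hy
  obtain ⟨x, hx, hxy⟩ := exists_mem_cube_lineMap_eq hr hrR v y fun i =>
    abs_le.2 ⟨(hy i).1.le, (hy i).2.le⟩
  exact (convexOn_norm_affineMap A).le_of_isMaxOn_of_lineMap_eq hA hx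
    (div_pos (by positivity) (by linarith)) ((div_le_one (by linarith)).2 (by linarith)) hxy

/-- Let `0 < r < R`, let `v ∈ {−r/2, r/2}ⁿ` be a vertex of `Q_r = (−r/2, r/2)ⁿ` and
`q := ((R+r)/(2r)) v + (−(R−r)/4, (R−r)/4)ⁿ`. If `A : ℝⁿ → ℝᵐ` is affine and `|A(v)|` is the
maximum of `|A|` over the closed cube `[−r/2, r/2]ⁿ`, then `|A(y)| ≥ |A(v)|` for every `y ∈ q`. -/
theorem stmt_3 (n m : ℕ) (hn : 1 ≤ n) (hm : 1 ≤ m) (r R : ℝ) (hr : 0 < r) (hrR : r < R)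
    (v : EuclideanSpace ℝ (Fin n)) (hv : ∀ i, v i = r / 2 ∨ v i = -(r / 2))
    (A : EuclideanSpace ℝ (Fin n) →ᵃ[ℝ] EuclideanSpace ℝ (Fin m))
    (hA : IsMaxOn (fun x => ‖A x‖) {x : EuclideanSpace ℝ (Fin n) | ∀ i, |x i| ≤ r / 2} v) :
    ∀ y : EuclideanSpace ℝ (Fin n),
      (∀ i, y i - ((R + r) / (2 * r)) * v i ∈ Set.Ioo (-((R - r) / 4)) ((R - r) / 4)) →
      ‖A v‖ ≤ ‖A y‖ :=
  stmt_3_general n m r R hr hrR v A hA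
end

section
/- Let n, m ≥ 1 and p ∈ [1, ∞). There exists a constant c ≥ 1 depending only on n and p such that for every affine map B: ℝⁿ → ℝᵐ, every x* ∈ ℝⁿ and all radii 0 < r < R: ∫_{Q_R(x*)} |B(x)|^p dx ≤ c (R/r)^{n+p} ∫_{Q_r(x*)} |B(x)|^p dx. -/
open MeasureTheory Set Pointwise

section Aux

lemma aux_add_rpow {p : ℝ} (hp : 1 ≤ p) {a b : ℝ} (ha : 0 ≤ a) (hb : 0 ≤ b) :
    (a + b) ^ p ≤ 2 ^ (p - 1) * (a ^ p + b ^ p) := by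
  have h := NNReal.rpow_add_le_mul_rpow_add_rpow a.toNNReal b.toNNReal hp
  have h2 := (NNReal.coe_le_coe).2 h
  push_cast at h2
  rwa [Real.coe_toNNReal a ha, Real.coe_toNNReal b hb] at h2

lemma aux_mid {p : ℝ} (hp : 1 ≤ p) {u v b : ℝ} (hu : 0 ≤ u) (hv : 0 ≤ v) (hb : 0 ≤ b)
    (h : 2 * b ≤ u + v) : b ^ p ≤ (u ^ p + v ^ p) / 2 := by
  have hp0 : 0 ≤ p := zero_le_one.trans hp
  have h1 : b ^ p ≤ ((u + v) / 2) ^ p :=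
    Real.rpow_le_rpow hb (by linarith) hp0
  have h2 := NNReal.rpow_arith_mean_le_arith_mean2_rpow (2⁻¹) (2⁻¹) u.toNNReal v.toNNReal
    (by rw [← two_mul, mul_inv_cancel₀ (two_ne_zero)]) hp
  have h3 := (NNReal.coe_le_coe).2 h2
  push_cast at h3
  rw [Real.coe_toNNReal u hu, Real.coe_toNNReal v hv] at h3
  calc b ^ p ≤ ((u + v) / 2) ^ p := h1
    _ = (2⁻¹ * u + 2⁻¹ * v) ^ p := by ring_nf
    _ ≤ 2⁻¹ * u ^ p + 2⁻¹ * v ^ p := h3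
    _ = (u ^ p + v ^ p) / 2 := by ring

variable {n : ℕ}

lemma cube_isOpen (x₀ : EuclideanSpace ℝ (Fin n)) (h : ℝ) :
    IsOpen {x : EuclideanSpace ℝ (Fin n) | ∀ i, |x i - x₀ i| < h / 2} := by
  have : {x : EuclideanSpace ℝ (Fin n) | ∀ i, |x i - x₀ i| < h / 2}
      = ⋂ i, {x : EuclideanSpace ℝ (Fin n) | |x i - x₀ i| < h / 2} := by
    ext x; simp [Set.mem_iInter]
  rw [this]
  refine isOpen_iInter_of_finite fun i => ?_
  have hc : Continuous fun x : EuclideanSpace ℝ (Fin n) => |x i - x₀ i| :=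
    (((EuclideanSpace.proj i : EuclideanSpace ℝ (Fin n) →L[ℝ] ℝ).continuous).sub
      continuous_const).abs
  exact isOpen_lt hc continuous_const

lemma cube_subset_ball (x₀ : EuclideanSpace ℝ (Fin n)) (h : ℝ) :
    {x : EuclideanSpace ℝ (Fin n) | ∀ i, |x i - x₀ i| < h / 2}
      ⊆ Metric.closedBall x₀ ((n : ℝ) * (|h| + 1)) := by
  intro x hx
  simp only [Metric.mem_closedBall, dist_eq_norm]
  have hb : ∀ i, |x i - x₀ i| ≤ |h| + 1 := by
    intro i
    have := hx i
    have : |x i - x₀ i| < |h| + 1 := lt_of_lt_of_le this (by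
      have := abs_nonneg h
      cases le_or_gt h 0 with
      | inl h0 => nlinarith [le_abs_self h]
      | inr h0 => nlinarith [le_abs_self h])
    linarith
  have hnorm : ‖x - x₀‖ = Real.sqrt (∑ i, ‖(x - x₀) i‖ ^ 2) := EuclideanSpace.norm_eq _
  rw [hnorm]
  have hsum : (∑ i, ‖(x - x₀) i‖ ^ 2) ≤ ((n : ℝ) * (|h| + 1)) ^ 2 := by
    have h1 : (∑ i, ‖(x - x₀) i‖ ^ 2) ≤ ∑ _i : Fin n, (|h| + 1) ^ 2 := by
      refine Finset.sum_le_sum fun i _ => ?_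
      have : ‖(x - x₀) i‖ = |x i - x₀ i| := by
        simp [PiLp.sub_apply, Real.norm_eq_abs]
      rw [this]
      have := hb i
      have h0 : (0:ℝ) ≤ |x i - x₀ i| := abs_nonneg _
      nlinarith
    have h2 : (∑ _i : Fin n, ((|h| + 1):ℝ) ^ 2) = (n : ℝ) * (|h| + 1) ^ 2 := by
      simp [Finset.sum_const, Finset.card_univ]
    rw [h2] at h1
    have hn0 : (0:ℝ) ≤ (n:ℝ) := Nat.cast_nonneg n
    have hn1 : (n:ℝ) ≤ (n:ℝ) ^ 2 := by
      have : n ≤ n ^ 2 := Nat.le_self_pow two_ne_zero n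
      exact_mod_cast this
    nlinarith [abs_nonneg h, sq_nonneg (|h| + 1)]
  calc Real.sqrt (∑ i, ‖(x - x₀) i‖ ^ 2) ≤ Real.sqrt (((n : ℝ) * (|h| + 1)) ^ 2) :=
        Real.sqrt_le_sqrt hsum
    _ = (n : ℝ) * (|h| + 1) := by
        rw [Real.sqrt_sq (by positivity)]

lemma integrableOn_cube {g : EuclideanSpace ℝ (Fin n) → ℝ} (hg : Continuous g)
    (x₀ : EuclideanSpace ℝ (Fin n)) (h : ℝ) :
    IntegrableOn g {x : EuclideanSpace ℝ (Fin n) | ∀ i, |x i - x₀ i| < h / 2} := by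
  refine IntegrableOn.mono_set ?_ (cube_subset_ball x₀ h)
  exact hg.continuousOn.integrableOn_compact (isCompact_closedBall x₀ _)

lemma Q1_eq : {y : EuclideanSpace ℝ (Fin n) | ∀ i, |y i| < 1 / 2}
    = {x : EuclideanSpace ℝ (Fin n) | ∀ i, |x i - (0 : EuclideanSpace ℝ (Fin n)) i| < 1 / 2} := by
  ext y; simp

lemma integrableOn_Q1 {g : EuclideanSpace ℝ (Fin n) → ℝ} (hg : Continuous g) :
    IntegrableOn g {y : EuclideanSpace ℝ (Fin n) | ∀ i, |y i| < 1 / 2} := by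
  rw [Q1_eq]; exact integrableOn_cube hg 0 1

lemma Q1_measurableSet :
    MeasurableSet {y : EuclideanSpace ℝ (Fin n) | ∀ i, |y i| < 1 / 2} := by
  rw [Q1_eq]; exact (cube_isOpen 0 1).measurableSet

lemma key_transform (f : EuclideanSpace ℝ (Fin n) → ℝ) (x₀ : EuclideanSpace ℝ (Fin n))
    {h : ℝ} (hh : 0 < h) :
    (∫ x in {x : EuclideanSpace ℝ (Fin n) | ∀ i, |x i - x₀ i| < h / 2}, f x) =
      h ^ n * ∫ y in {y : EuclideanSpace ℝ (Fin n) | ∀ i, |y i| < 1 / 2}, f (x₀ + h • y) := by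
  set Q1 : Set (EuclideanSpace ℝ (Fin n)) := {y : EuclideanSpace ℝ (Fin n) | ∀ i, |y i| < 1 / 2}
  have htrans : (∫ x in {x : EuclideanSpace ℝ (Fin n) | ∀ i, |x i - x₀ i| < h / 2}, f x)
      = ∫ z in {z : EuclideanSpace ℝ (Fin n) | ∀ i, |z i| < h / 2}, f (x₀ + z) := by
    have hmp : MeasurePreserving (fun z : EuclideanSpace ℝ (Fin n) => x₀ + z) volume volume :=
      measurePreserving_add_left volume x₀
    have hemb : MeasurableEmbedding (fun z : EuclideanSpace ℝ (Fin n) => x₀ + z) :=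
      (Homeomorph.addLeft x₀).measurableEmbedding
    have hpre : (fun z : EuclideanSpace ℝ (Fin n) => x₀ + z) ⁻¹'
        {x : EuclideanSpace ℝ (Fin n) | ∀ i, |x i - x₀ i| < h / 2}
        = {z : EuclideanSpace ℝ (Fin n) | ∀ i, |z i| < h / 2} := by
      ext z
      simp [PiLp.add_apply, add_sub_cancel_left]
    rw [← hmp.setIntegral_preimage_emb hemb f _, hpre]
  have hscale : (∫ z in {z : EuclideanSpace ℝ (Fin n) | ∀ i, |z i| < h / 2}, f (x₀ + z))
      = h ^ n * ∫ y in Q1, f (x₀ + h • y) := by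
    have hsmul : h • Q1 = {z : EuclideanSpace ℝ (Fin n) | ∀ i, |z i| < h / 2} := by
      ext z
      rw [mem_smul_set_iff_inv_smul_mem₀ hh.ne']
      simp only [Q1, Set.mem_setOf_eq, PiLp.smul_apply, smul_eq_mul]
      constructor
      · intro hz i
        have := hz i
        rw [abs_mul, abs_inv, abs_of_pos hh] at this
        rw [inv_mul_lt_iff₀ hh] at this
        linarith
      · intro hz i
        rw [abs_mul, abs_inv, abs_of_pos hh, inv_mul_lt_iff₀ hh]
        linarith [hz i]
    have := Measure.setIntegral_comp_smul_of_pos (volume : Measure (EuclideanSpace ℝ (Fin n)))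
      (fun z => f (x₀ + z)) Q1 hh
    rw [hsmul, finrank_euclideanSpace_fin] at this
    simp only [smul_eq_mul] at this
    rw [this, ← mul_assoc, mul_inv_cancel₀ (pow_ne_zero _ hh.ne'), one_mul]
  rw [htrans, hscale]

lemma neg_sym (w : EuclideanSpace ℝ (Fin n) → ℝ) :
    (∫ y in {y : EuclideanSpace ℝ (Fin n) | ∀ i, |y i| < 1 / 2}, w (-y)) =
      ∫ y in {y : EuclideanSpace ℝ (Fin n) | ∀ i, |y i| < 1 / 2}, w y := by
  have hmp : MeasurePreserving (fun y : EuclideanSpace ℝ (Fin n) => -y) volume volume :=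
    Measure.measurePreserving_neg volume
  have hemb : MeasurableEmbedding (fun y : EuclideanSpace ℝ (Fin n) => -y) :=
    (Homeomorph.neg (EuclideanSpace ℝ (Fin n))).measurableEmbedding
  have hpre : (fun y : EuclideanSpace ℝ (Fin n) => -y) ⁻¹'
      {y : EuclideanSpace ℝ (Fin n) | ∀ i, |y i| < 1 / 2}
      = {y : EuclideanSpace ℝ (Fin n) | ∀ i, |y i| < 1 / 2} := by
    ext y
    simp [PiLp.neg_apply, abs_neg]
  rw [← hmp.setIntegral_preimage_emb hemb w _, hpre]

end Aux

set_option maxHeartbeats 1000000 in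
/-- For `n, m ≥ 1` and `p ∈ [1, ∞)` there is `c ≥ 1` depending only on `n, p` such
that for every affine `B : ℝⁿ → ℝᵐ`, every center `x*` and all `0 < r < R`:
`∫_{Q_R(x*)} |B|^p ≤ c (R/r)^{n+p} ∫_{Q_r(x*)} |B|^p`. -/
theorem stmt_4 (n m : ℕ) (hn : 1 ≤ n) (hm : 1 ≤ m) (p : ℝ) (hp : 1 ≤ p) :
    ∃ c : ℝ, 1 ≤ c ∧
      ∀ (B : EuclideanSpace ℝ (Fin n) →ᵃ[ℝ] EuclideanSpace ℝ (Fin m))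
        (x₀ : EuclideanSpace ℝ (Fin n)) (r R : ℝ), 0 < r → r < R →
        (∫ x in {x : EuclideanSpace ℝ (Fin n) | ∀ i, |x i - x₀ i| < R / 2}, ‖B x‖ ^ p) ≤
          c * (R / r) ^ ((n : ℝ) + p) *
            ∫ x in {x : EuclideanSpace ℝ (Fin n) | ∀ i, |x i - x₀ i| < r / 2}, ‖B x‖ ^ p := by
  have hp0 : 0 ≤ p := zero_le_one.trans hp
  refine ⟨2 ^ p, ?_, ?_⟩
  · calc (1:ℝ) = 2 ^ (0:ℝ) := by simp
      _ ≤ 2 ^ p := Real.rpow_le_rpow_of_exponent_le one_le_two hp0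
  intro B x₀ r R hr hrR
  have hR : 0 < R := hr.trans hrR
  set L := B.linear with hL
  set b := B x₀ with hb
  set Q1 : Set (EuclideanSpace ℝ (Fin n)) := {y : EuclideanSpace ℝ (Fin n) | ∀ i, |y i| < 1 / 2}
    with hQ1
  set f : EuclideanSpace ℝ (Fin n) → ℝ := fun x => ‖B x‖ ^ p with hf
  have hBc : Continuous B := B.continuous_of_finiteDimensional
  have hLc : Continuous L := L.continuous_of_finiteDimensional
  have hBpt : ∀ (t : ℝ) (y : EuclideanSpace ℝ (Fin n)), B (x₀ + t • y) = t • L y + b := by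
    intro t y
    rw [add_comm, ← vadd_eq_add, AffineMap.map_vadd, LinearMap.map_smul, vadd_eq_add]
  -- the rescaled integrals
  set w : ℝ → EuclideanSpace ℝ (Fin n) → ℝ := fun t y => ‖t • L y + b‖ ^ p with hw
  have hwc : ∀ t, Continuous (w t) := by
    intro t
    exact (((hLc.const_smul t).add continuous_const).norm).rpow_const fun y => Or.inr hp0
  have hkey : ∀ {h : ℝ}, 0 < h →
      (∫ x in {x : EuclideanSpace ℝ (Fin n) | ∀ i, |x i - x₀ i| < h / 2}, ‖B x‖ ^ p)
        = h ^ n * ∫ y in Q1, w h y := by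
    intro h hh
    rw [key_transform f x₀ hh]
    congr 1
    refine setIntegral_congr_fun Q1_measurableSet fun y _ => ?_
    simp only [hf, hw, hBpt]
  -- nonnegativity and integrability
  have hwnn : ∀ t y, 0 ≤ w t y := fun t y => Real.rpow_nonneg (norm_nonneg _) p
  have hJr0 : 0 ≤ ∫ y in Q1, w r y :=
    setIntegral_nonneg Q1_measurableSet fun y _ => hwnn r y
  -- constant bound : ∫ ‖b‖^p ≤ ∫ w r
  have hconst : (∫ _y in Q1, ‖b‖ ^ p) ≤ ∫ y in Q1, w r y := by
    have hptw : ∀ y : EuclideanSpace ℝ (Fin n),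
        ‖b‖ ^ p ≤ (w r y + w r (-y)) / 2 := by
      intro y
      have hval : w r (-y) = ‖-(r • L y) + b‖ ^ p := by
        simp only [hw, map_neg, smul_neg]
      rw [hval]
      refine aux_mid hp (norm_nonneg _) (norm_nonneg _) (norm_nonneg _) ?_
      have : (r • L y + b) + (-(r • L y) + b) = b + b := by abel
      calc 2 * ‖b‖ = ‖b + b‖ := by
            rw [← two_smul ℝ b, norm_smul]; simp
        _ = ‖(r • L y + b) + (-(r • L y) + b)‖ := by rw [this]
        _ ≤ ‖r • L y + b‖ + ‖-(r • L y) + b‖ := norm_add_le _ _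
    have hint1 : IntegrableOn (fun _y : EuclideanSpace ℝ (Fin n) => ‖b‖ ^ p) Q1 :=
      integrableOn_Q1 continuous_const
    have hint2 : IntegrableOn (fun y => (w r y + w r (-y)) / 2) Q1 := by
      refine integrableOn_Q1 ?_
      exact (((hwc r).add ((hwc r).comp continuous_neg)).div_const 2)
    calc (∫ _y in Q1, ‖b‖ ^ p) ≤ ∫ y in Q1, (w r y + w r (-y)) / 2 :=
          setIntegral_mono_on hint1 hint2 Q1_measurableSet fun y _ => hptw y
      _ = ((∫ y in Q1, w r y) + ∫ y in Q1, w r (-y)) / 2 := by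
          have hI3 : IntegrableOn (fun y : EuclideanSpace ℝ (Fin n) => w r (-y)) Q1 :=
            integrableOn_Q1 ((hwc r).comp continuous_neg)
          rw [integral_div, integral_add (integrableOn_Q1 (hwc r)) hI3]
      _ = ∫ y in Q1, w r y := by
          rw [neg_sym (w r)]; ring
  -- main comparison: J R ≤ 2^p (R/r)^p J r
  have hfrac1 : (1:ℝ) ≤ R / r := (one_le_div hr).2 hrR.le
  have hfrac0 : (0:ℝ) < R / r := div_pos hR hr
  have hmain : (∫ y in Q1, w R y) ≤ 2 ^ p * (R / r) ^ p * ∫ y in Q1, w r y := by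
    have hptw : ∀ y : EuclideanSpace ℝ (Fin n),
        w R y ≤ (R / r) ^ p * (‖r • L y + b‖ + ‖b‖) ^ p := by
      intro y
      have hdec : R • L y + b = (R / r) • (r • L y + b) + (1 - R / r) • b := by
        rw [smul_add, smul_smul, div_mul_cancel₀ _ hr.ne', add_assoc, ← add_smul,
          show R / r + (1 - R / r) = (1:ℝ) by ring, one_smul]
      have hnorm : ‖R • L y + b‖ ≤ (R / r) * (‖r • L y + b‖ + ‖b‖) := by
        rw [hdec]
        calc ‖(R / r) • (r • L y + b) + (1 - R / r) • b‖
            ≤ ‖(R / r) • (r • L y + b)‖ + ‖(1 - R / r) • b‖ := norm_add_le _ _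
          _ = (R / r) * ‖r • L y + b‖ + |1 - R / r| * ‖b‖ := by
              rw [norm_smul, norm_smul, Real.norm_eq_abs, Real.norm_eq_abs,
                abs_of_pos hfrac0]
          _ ≤ (R / r) * ‖r • L y + b‖ + (R / r) * ‖b‖ := by
              have : |1 - R / r| = R / r - 1 := by
                rw [abs_of_nonpos (by linarith)]; ring
              rw [this]
              have := norm_nonneg b
              nlinarith
          _ = (R / r) * (‖r • L y + b‖ + ‖b‖) := by ring
      calc w R y = ‖R • L y + b‖ ^ p := rfl
        _ ≤ ((R / r) * (‖r • L y + b‖ + ‖b‖)) ^ p :=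
            Real.rpow_le_rpow (norm_nonneg _) hnorm hp0
        _ = (R / r) ^ p * (‖r • L y + b‖ + ‖b‖) ^ p :=
            Real.mul_rpow hfrac0.le (by positivity)
    have hcont1 : Continuous fun y : EuclideanSpace ℝ (Fin n) =>
        (‖r • L y + b‖ + ‖b‖) ^ p := by
      refine Continuous.rpow_const ?_ fun y => Or.inr hp0
      exact (((hLc.const_smul r).add continuous_const).norm).add continuous_const
    have step1 : (∫ y in Q1, w R y)
        ≤ ∫ y in Q1, (R / r) ^ p * (‖r • L y + b‖ + ‖b‖) ^ p :=
      setIntegral_mono_on (integrableOn_Q1 (hwc R))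
        (integrableOn_Q1 (continuous_const.mul hcont1)) Q1_measurableSet fun y _ => hptw y
    have step2 : (∫ y in Q1, (R / r) ^ p * (‖r • L y + b‖ + ‖b‖) ^ p)
        = (R / r) ^ p * ∫ y in Q1, (‖r • L y + b‖ + ‖b‖) ^ p := integral_const_mul _ _
    have step3 : (∫ y in Q1, (‖r • L y + b‖ + ‖b‖) ^ p) ≤ 2 ^ p * ∫ y in Q1, w r y := by
      have hptw2 : ∀ y : EuclideanSpace ℝ (Fin n),
          (‖r • L y + b‖ + ‖b‖) ^ p ≤ 2 ^ (p - 1) * (w r y + ‖b‖ ^ p) :=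
        fun y => aux_add_rpow hp (norm_nonneg _) (norm_nonneg _)
      have hcont2 : Continuous fun y : EuclideanSpace ℝ (Fin n) =>
          (2:ℝ) ^ (p - 1) * (w r y + ‖b‖ ^ p) :=
        continuous_const.mul ((hwc r).add continuous_const)
      calc (∫ y in Q1, (‖r • L y + b‖ + ‖b‖) ^ p)
          ≤ ∫ y in Q1, 2 ^ (p - 1) * (w r y + ‖b‖ ^ p) :=
            setIntegral_mono_on (integrableOn_Q1 hcont1) (integrableOn_Q1 hcont2)
              Q1_measurableSet fun y _ => hptw2 y
        _ = 2 ^ (p - 1) * ((∫ y in Q1, w r y) + ∫ _y in Q1, ‖b‖ ^ p) := by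
            rw [integral_const_mul, integral_add (integrableOn_Q1 (hwc r))
              (integrableOn_Q1 continuous_const)]
        _ ≤ 2 ^ (p - 1) * ((∫ y in Q1, w r y) + ∫ y in Q1, w r y) := by
            have h2 : (0:ℝ) ≤ 2 ^ (p - 1) := Real.rpow_nonneg (by norm_num) _
            nlinarith [hconst]
        _ = 2 ^ (p - 1) * 2 * ∫ y in Q1, w r y := by ring
        _ = 2 ^ p * ∫ y in Q1, w r y := by
            have h2p : (2:ℝ) ^ (p - 1) * 2 = 2 ^ p := by
              have h := Real.rpow_add (show (0:ℝ) < 2 by norm_num) (p - 1) 1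
              rw [Real.rpow_one] at h
              rw [← h]; norm_num
            rw [h2p]
    calc (∫ y in Q1, w R y) ≤ (R / r) ^ p * ∫ y in Q1, (‖r • L y + b‖ + ‖b‖) ^ p := by
          rw [← step2]; exact step1
      _ ≤ (R / r) ^ p * (2 ^ p * ∫ y in Q1, w r y) := by
          have h0 : (0:ℝ) ≤ (R / r) ^ p := Real.rpow_nonneg hfrac0.le _
          exact mul_le_mul_of_nonneg_left step3 h0
      _ = 2 ^ p * (R / r) ^ p * ∫ y in Q1, w r y := by ring
  -- assemble
  rw [hkey hR, hkey hr]
  have hpow : (R / r : ℝ) ^ ((n:ℝ) + p) = (R / r) ^ (n:ℕ) * (R / r) ^ p := by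
    rw [Real.rpow_add hfrac0, Real.rpow_natCast]
  rw [hpow]
  have hRn : ((R/r)^(n:ℕ) : ℝ) * r ^ n = R ^ n := by
    rw [div_pow, div_mul_cancel₀ _ (pow_ne_zero _ hr.ne')]
  calc R ^ n * ∫ y in Q1, w R y
      ≤ R ^ n * (2 ^ p * (R / r) ^ p * ∫ y in Q1, w r y) :=
        mul_le_mul_of_nonneg_left hmain (by positivity)
    _ = 2 ^ p * ((R/r)^(n:ℕ) * (R / r) ^ p) * (r ^ n * ∫ y in Q1, w r y) := by
        rw [← hRn]; ring
end

section
/- Let n, m ≥ 1, p ∈ [1, ∞) and λ ∈ (0, 1]. There exists a constant C depending only on n, p and λ such that for every affine map A: ℝⁿ → ℝᵐ, every x* ∈ ℝⁿ, every h > 0, and every Lebesgue-measurable set S ⊆ Q_h(x*) with |S| ≥ λ hⁿ, one has |S| · (sup_{x ∈ Q_h(x*)} |A(x)|)^p ≤ C ∫_S |A(x)|^p dx. -/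
open MeasureTheory Set

/-!
Fix `x₁` in the cube `Q = Q_h(x*)` and `t = λ / (8 (n + 1))`. Composing `A` with a functional of
norm at most one that takes the value `‖A x₁‖` at `A x₁` gives a real affine map `g` with
`|g| ≤ ‖A‖` and `g x₁ = ‖A x₁‖`. Let `a` be the largest partial derivative of `g` in absolute
value. If `|g z| < t |g x₁|` for some `z ∈ Q`, then `(1 - t) |g x₁| ≤ n h |a|`, because `g` varies
by at most `n h |a|` on `Q`. So the set of points of `Q` where `|g| < t |g x₁|` lies in a slab of
width `2 t |g x₁| / |a| ≤ 4 n t h`, and this slab meets `Q` in volume at most `4 n t hⁿ ≤ |S| / 2`.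
On the other half of `S` one has `‖A‖ ≥ t ‖A x₁‖`, hence `|S| ‖A x₁‖ᵖ ≤ 2 t⁻ᵖ ∫_S ‖A‖ᵖ`. Taking
the supremum over `x₁` proves the theorem.
-/

theorem measureReal_mul_le_two_mul_setIntegral {α : Type*} [MeasurableSpace α] {μ : Measure α}
    {S : Set α} {f : α → ℝ} {τ : ℝ} (hS : MeasurableSet S) (hSfin : μ S ≠ ⊤)
    (hf : IntegrableOn f S μ) (hf0 : ∀ x ∈ S, 0 ≤ f x) (hτ : 0 ≤ τ)
    (hsmall : 2 * μ {x ∈ S | f x < τ} ≤ μ S) :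
    μ.real S * τ ≤ 2 * ∫ x in S, f x ∂μ := by
  have hmarkov := mul_meas_ge_le_integral_of_nonneg (ae_restrict_of_forall_mem hS hf0) hf τ
  rw [measureReal_restrict_apply' hS] at hmarkov
  have hsmall' : 2 * μ.real {x ∈ S | f x < τ} ≤ μ.real S := by
    simpa [measureReal_def, ENNReal.toReal_mul] using ENNReal.toReal_mono hSfin hsmall
  have hsplit : μ.real S ≤ μ.real ({x | τ ≤ f x} ∩ S) + μ.real {x ∈ S | f x < τ} := by
    refine (measureReal_mono (fun x hx => ?_) ?_).trans (measureReal_union_le _ _)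
    · by_cases hfx : τ ≤ f x
      · exact Or.inl ⟨hfx, hx⟩
      · exact Or.inr ⟨hx, not_le.1 hfx⟩
    · exact ne_top_of_le_ne_top hSfin
        (measure_mono (union_subset inter_subset_right (sep_subset _ _)))
  nlinarith

theorem Real.sSup_rpow_le {s : Set ℝ} (hs : s.Nonempty) (hs0 : ∀ x ∈ s, 0 ≤ x) {p K : ℝ}
    (hp : 0 < p) (hK : ∀ x ∈ s, x ^ p ≤ K) : sSup s ^ p ≤ K := by
  obtain ⟨x, hx⟩ := hs
  have hK0 : 0 ≤ K := (Real.rpow_nonneg (hs0 x hx) p).trans (hK x hx)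
  have hle : sSup s ≤ K ^ p⁻¹ := csSup_le ⟨x, hx⟩ fun y hy =>
    calc y = (y ^ p) ^ p⁻¹ := (Real.rpow_rpow_inv (hs0 y hy) hp.ne').symm
      _ ≤ K ^ p⁻¹ := Real.rpow_le_rpow (Real.rpow_nonneg (hs0 y hy) p) (hK y hy) (by positivity)
  calc sSup s ^ p ≤ (K ^ p⁻¹) ^ p := Real.rpow_le_rpow (Real.sSup_nonneg hs0) hle hp.le
    _ = K := Real.rpow_inv_rpow hK0 hp.ne'

section

variable {ι : Type*} [Fintype ι]

theorem LinearMap.apply_eq_sum_apply_single_mul [DecidableEq ι] (ℓ : (ι → ℝ) →ₗ[ℝ] ℝ)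
    (x : ι → ℝ) : ℓ x = ∑ j, ℓ (Pi.single j 1) * x j := by
  conv_lhs => rw [← Finset.univ_sum_single x]
  simp only [map_sum]
  refine Finset.sum_congr rfl fun j _ => ?_
  rw [mul_comm, ← smul_eq_mul, ← map_smul, ← Pi.single_smul, smul_eq_mul, mul_one]

theorem AffineMap.abs_sub_le_of_forall_abs_sub_le [DecidableEq ι] (g : (ι → ℝ) →ᵃ[ℝ] ℝ)
    {x y : ι → ℝ} {δ : ℝ} (hxy : ∀ i, |x i - y i| ≤ δ) :
    |g x - g y| ≤ ∑ i, |g.linear (Pi.single i 1)| * δ := by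
  rw [← vsub_eq_sub (g x), ← g.linearMap_vsub, g.linear.apply_eq_sum_apply_single_mul]
  refine (Finset.abs_sum_le_sum_abs _ _).trans (Finset.sum_le_sum fun i _ => ?_)
  rw [abs_mul]
  exact mul_le_mul_of_nonneg_left (hxy i) (abs_nonneg _)

/-- The shear `x ↦ Function.update x i₀ (ℓ x)` has determinant `ℓ (Pi.single i₀ 1)` and maps the
slab into a box whose `i₀`-th side has length `2 s`. -/
theorem volume_pi_inter_slab_le [DecidableEq ι] (I : ι → Set ℝ) (ℓ : (ι → ℝ) →ₗ[ℝ] ℝ) (i₀ : ι)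
    (c s : ℝ) :
    ENNReal.ofReal |ℓ (Pi.single i₀ 1)| * volume (univ.pi I ∩ {x | |ℓ x - c| ≤ s}) ≤
      ENNReal.ofReal (2 * s) * ∏ j ∈ Finset.univ.erase i₀, volume (I j) := by
  set a : ι → ℝ := fun j => ℓ (Pi.single j 1)
  set M : Matrix ι ι ℝ := Matrix.updateRow 1 i₀ a
  have hdet : M.det = a i₀ := by
    have ha : ∑ k, a k • (1 : Matrix ι ι ℝ) k = a := by ext j; simp [Matrix.one_apply]
    simpa [ha] using Matrix.det_updateRow_sum (1 : Matrix ι ι ℝ) i₀ a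
  have hM : ∀ x, Matrix.toLin' M x = Function.update x i₀ (ℓ x) := by
    intro x
    ext i
    rcases eq_or_ne i i₀ with rfl | hi
    · simp [M, Matrix.mulVec, dotProduct, a, ℓ.apply_eq_sum_apply_single_mul x]
    · simp [M, hi, Matrix.mulVec, dotProduct, Matrix.one_apply]
  calc ENNReal.ofReal |a i₀| * volume (univ.pi I ∩ {x | |ℓ x - c| ≤ s})
      = volume (Matrix.toLin' M '' (univ.pi I ∩ {x | |ℓ x - c| ≤ s})) := by
        rw [Measure.addHaar_image_linearMap, LinearMap.det_toLin', hdet]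
    _ ≤ volume (univ.pi (Function.update I i₀ (Icc (c - s) (c + s)))) := by
        refine measure_mono (image_subset_iff.2 fun x ⟨hxI, (hxs : |ℓ x - c| ≤ s)⟩ => ?_)
        simp only [mem_preimage, hM, mem_univ_pi]
        intro i
        rcases eq_or_ne i i₀ with rfl | hi
        · rw [Function.update_self, Function.update_self]
          constructor <;> linarith [abs_le.1 hxs]
        · simpa [hi] using hxI i (mem_univ i)
    _ = ENNReal.ofReal (2 * s) * ∏ j ∈ Finset.univ.erase i₀, volume (I j) := by
        rw [volume_pi_pi, ← Finset.mul_prod_erase _ _ (Finset.mem_univ i₀), Function.update_self,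
          Real.volume_Icc]
        congr 1
        · ring_nf
        · exact Finset.prod_congr rfl fun j hj => by
            rw [Function.update_of_ne (Finset.ne_of_mem_erase hj)]

theorem volume_cube_inter_slab_le [DecidableEq ι] (x₀ : ι → ℝ) {h : ℝ} (hh : 0 ≤ h)
    (ℓ : (ι → ℝ) →ₗ[ℝ] ℝ) (i₀ : ι) (c s : ℝ) :
    ENNReal.ofReal |ℓ (Pi.single i₀ 1)| *
        volume ({x | ∀ i, |x i - x₀ i| < h / 2} ∩ {x | |ℓ x - c| ≤ s}) ≤
      ENNReal.ofReal (2 * s * h ^ (Fintype.card ι - 1)) := by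
  have hQ : {x : ι → ℝ | ∀ i, |x i - x₀ i| < h / 2} ⊆
      univ.pi fun i => Ioo (x₀ i - h / 2) (x₀ i + h / 2) := fun x hx i _ =>
    ⟨by linarith [abs_lt.1 (hx i)], by linarith [abs_lt.1 (hx i)]⟩
  refine (mul_le_mul_right (measure_mono (inter_subset_inter_left _ hQ)) _).trans ?_
  refine (volume_pi_inter_slab_le _ ℓ i₀ c s).trans_eq ?_
  simp only [Real.volume_Ioo, add_sub_sub_cancel, add_halves, Finset.prod_const,
    Finset.card_erase_of_mem (Finset.mem_univ _), Finset.card_univ]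
  rw [← ENNReal.ofReal_pow hh, ← ENNReal.ofReal_mul' (by positivity)]

theorem AffineMap.exists_abs_le_card_mul_of_abs_lt [DecidableEq ι] (g : (ι → ℝ) →ᵃ[ℝ] ℝ)
    {x₀ x₁ z : ι → ℝ} {h t : ℝ} (hx₁ : ∀ i, |x₁ i - x₀ i| < h / 2)
    (hz : ∀ i, |z i - x₀ i| < h / 2) (ht : t ≤ 1 / 2) (hgz : |g z| < t * |g x₁|) :
    ∃ i₀, 0 < |g.linear (Pi.single i₀ 1)| ∧
      |g x₁| ≤ 2 * Fintype.card ι * (|g.linear (Pi.single i₀ 1)| * h) := by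
  set a : ι → ℝ := fun j => g.linear (Pi.single j 1)
  have hosc : |g x₁ - g z| ≤ ∑ i, |a i| * h := g.abs_sub_le_of_forall_abs_sub_le fun i => by
    rw [abs_le]
    constructor <;> linarith [abs_lt.1 (hx₁ i), abs_lt.1 (hz i)]
  have hdiff : (1 - t) * |g x₁| < ∑ i, |a i| * h := by
    linarith [abs_sub_abs_le_abs_sub (g x₁) (g z)]
  have hsum0 : 0 < ∑ i, |a i| * h := lt_of_le_of_lt (by nlinarith [abs_nonneg (g x₁)]) hdiff
  obtain ⟨i₀, -, hi₀⟩ := Finset.exists_max_image Finset.univ (fun i => |a i|)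
    (Finset.nonempty_of_sum_ne_zero hsum0.ne')
  have hh : 0 < h := by linarith [abs_nonneg (x₁ i₀ - x₀ i₀), hx₁ i₀]
  have hsum : ∑ i, |a i| * h ≤ Fintype.card ι * (|a i₀| * h) := by
    simpa using Finset.sum_le_card_nsmul Finset.univ _ _ fun i _ =>
      mul_le_mul_of_nonneg_right (hi₀ i (Finset.mem_univ i)) hh.le
  refine ⟨i₀, lt_of_le_of_ne (abs_nonneg _) fun ha0 => ?_, by nlinarith [abs_nonneg (g x₁)]⟩
  rw [← ha0, zero_mul, mul_zero] at hsum
  linarith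

theorem AffineMap.volume_cube_sublevel_abs_le (g : (ι → ℝ) →ᵃ[ℝ] ℝ) (x₀ x₁ : ι → ℝ) {h t : ℝ}
    (hx₁ : ∀ i, |x₁ i - x₀ i| < h / 2) (ht : t ≤ 1 / 2) :
    volume {x | (∀ i, |x i - x₀ i| < h / 2) ∧ |g x| < t * |g x₁|} ≤
      ENNReal.ofReal (4 * Fintype.card ι * t * h ^ Fintype.card ι) := by
  classical
  set Z := {x | (∀ i, |x i - x₀ i| < h / 2) ∧ |g x| < t * |g x₁|}
  set n := Fintype.card ι
  rcases Z.eq_empty_or_nonempty with hZ | ⟨z, hz, hgz⟩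
  · simp [hZ]
  obtain ⟨i₀, ha, hgx₁⟩ := g.exists_abs_le_card_mul_of_abs_lt hx₁ hz ht hgz
  set a := g.linear (Pi.single i₀ 1)
  have ht0 : 0 < t := pos_of_mul_pos_left ((abs_nonneg _).trans_lt hgz) (abs_nonneg _)
  have hh : 0 < h := by linarith [abs_nonneg (x₁ i₀ - x₀ i₀), hx₁ i₀]
  have hwidth : 2 * (t * |g x₁|) * h ^ (n - 1) ≤ |a| * (4 * n * t * h ^ n) := by
    have hpow : h ^ n = h * h ^ (n - 1) := by
      rw [← pow_succ', Nat.sub_add_cancel (Fintype.card_pos_iff.2 ⟨i₀⟩)]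
    rw [hpow]
    nlinarith [mul_le_mul_of_nonneg_left hgx₁ (by positivity : (0 : ℝ) ≤ 2 * t * h ^ (n - 1))]
  have hZ : Z ⊆ {x | ∀ i, |x i - x₀ i| < h / 2} ∩ {x | |g.linear x - -g 0| ≤ t * |g x₁|} := by
    rintro x ⟨hxQ, hxg⟩
    have hgx : g.linear x = g x - g 0 := by simpa using g.linearMap_vsub x 0
    exact ⟨hxQ, by simpa [hgx] using hxg.le⟩
  rw [← ENNReal.mul_le_mul_iff_right (ENNReal.ofReal_pos.2 ha).ne' ENNReal.ofReal_ne_top,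
    ← ENNReal.ofReal_mul ha.le]
  calc ENNReal.ofReal |a| * volume Z
      ≤ ENNReal.ofReal (2 * (t * |g x₁|) * h ^ (n - 1)) :=
        (mul_le_mul_right (measure_mono hZ) _).trans
          (volume_cube_inter_slab_le x₀ hh.le g.linear i₀ (-g 0) (t * |g x₁|))
    _ ≤ _ := ENNReal.ofReal_le_ofReal hwidth

theorem AffineMap.volume_cube_sublevel_norm_le {F : Type*} [NormedAddCommGroup F]
    [NormedSpace ℝ F] (A : EuclideanSpace ℝ ι →ᵃ[ℝ] F) (x₀ x₁ : EuclideanSpace ℝ ι) {h t : ℝ}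
    (hx₁ : ∀ i, |x₁ i - x₀ i| < h / 2) (ht : t ≤ 1 / 2) :
    volume {x | (∀ i, |x i - x₀ i| < h / 2) ∧ ‖A x‖ < t * ‖A x₁‖} ≤
      ENNReal.ofReal (4 * Fintype.card ι * t * h ^ Fintype.card ι) := by
  obtain ⟨φ, hφ, hφx₁⟩ := exists_dual_vector'' ℝ (A x₁)
  set g : (ι → ℝ) →ᵃ[ℝ] ℝ := (φ.toLinearMap.toAffineMap.comp A).comp
    (WithLp.linearEquiv 2 ℝ (ι → ℝ)).symm.toLinearMap.toAffineMap
  have hg : ∀ x, |g (WithLp.ofLp x)| ≤ ‖A x‖ := fun x => by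
    simpa [g] using φ.le_of_opNorm_le hφ (A x)
  have hgx₁ : |g (WithLp.ofLp x₁)| = ‖A x₁‖ := by
    simpa [g] using congrArg abs hφx₁
  calc volume {x | (∀ i, |x i - x₀ i| < h / 2) ∧ ‖A x‖ < t * ‖A x₁‖}
      ≤ volume (WithLp.ofLp ⁻¹' {y | (∀ i, |y i - x₀ i| < h / 2) ∧
          |g y| < t * |g (WithLp.ofLp x₁)|}) := by
        refine measure_mono fun x ⟨hxQ, hxA⟩ => ⟨hxQ, ?_⟩
        rw [hgx₁]
        exact (hg x).trans_lt hxA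
    _ ≤ _ := (PiLp.volume_preserving_ofLp ι).measure_preimage_le _
    _ ≤ _ := g.volume_cube_sublevel_abs_le _ _ hx₁ ht

theorem EuclideanSpace.isBounded_setOf_forall_abs_sub_lt (x₀ : EuclideanSpace ℝ ι) (r : ℝ) :
    Bornology.IsBounded {x : EuclideanSpace ℝ ι | ∀ i, |x i - x₀ i| < r} := by
  refine ((PiLp.antilipschitzWith_ofLp 2 _).isBounded_preimage
    (Bornology.IsBounded.pi fun i => Metric.isBounded_Ioo (x₀ i - r) (x₀ i + r))).subset
    fun x hx i _ => ?_
  constructor <;> linarith [abs_lt.1 (hx i)]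

theorem AffineMap.measureReal_mul_norm_rpow_le_setIntegral {F : Type*} [NormedAddCommGroup F]
    [NormedSpace ℝ F] (A : EuclideanSpace ℝ ι →ᵃ[ℝ] F) {x₀ x₁ : EuclideanSpace ℝ ι}
    {h p t : ℝ} (hp : 0 < p) (ht0 : 0 < t) (ht : t ≤ 1 / 2) {S : Set (EuclideanSpace ℝ ι)}
    (hS : MeasurableSet S) (hSQ : S ⊆ {x | ∀ i, |x i - x₀ i| < h / 2})
    (hSvol : 8 * Fintype.card ι * t * h ^ Fintype.card ι ≤ (volume S).toReal)
    (hx₁ : ∀ i, |x₁ i - x₀ i| < h / 2) :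
    (volume S).toReal * ‖A x₁‖ ^ p ≤ 2 / t ^ p * ∫ x in S, ‖A x‖ ^ p := by
  have hQ := EuclideanSpace.isBounded_setOf_forall_abs_sub_lt x₀ (h / 2)
  have hSfin : volume S ≠ ⊤ := (hQ.subset hSQ).measure_lt_top.ne
  have hint : IntegrableOn (fun x => ‖A x‖ ^ p) S :=
    (ContinuousOn.integrableOn_compact hQ.isCompact_closure
      (A.continuous_of_finiteDimensional.norm.rpow_const fun _ => Or.inr hp.le).continuousOn)
      |>.mono_set (hSQ.trans subset_closure)
  have hsmall : 2 * volume {x ∈ S | ‖A x‖ ^ p < (t * ‖A x₁‖) ^ p} ≤ volume S :=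
    calc 2 * volume {x ∈ S | ‖A x‖ ^ p < (t * ‖A x₁‖) ^ p}
        ≤ 2 * volume {x | (∀ i, |x i - x₀ i| < h / 2) ∧ ‖A x‖ < t * ‖A x₁‖} := by
          refine mul_le_mul_right (measure_mono ?_) 2
          rintro x ⟨hxS, hx⟩
          exact ⟨hSQ hxS, (Real.rpow_lt_rpow_iff (norm_nonneg _) (by positivity) hp).1 hx⟩
      _ ≤ 2 * ENNReal.ofReal (4 * Fintype.card ι * t * h ^ Fintype.card ι) :=
          mul_le_mul_right (A.volume_cube_sublevel_norm_le x₀ x₁ hx₁ ht) 2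
      _ = ENNReal.ofReal (8 * Fintype.card ι * t * h ^ Fintype.card ι) := by
          rw [← ENNReal.ofReal_ofNat 2, ← ENNReal.ofReal_mul zero_le_two]
          ring_nf
      _ ≤ volume S := ENNReal.ofReal_le_of_le_toReal hSvol
  have hcheb := measureReal_mul_le_two_mul_setIntegral hS hSfin hint
    (fun _ _ => by positivity) (by positivity) hsmall
  rw [Real.mul_rpow ht0.le (norm_nonneg _)] at hcheb
  rw [div_mul_eq_mul_div, le_div_iff₀ (by positivity)]
  calc (volume S).toReal * ‖A x₁‖ ^ p * t ^ p = volume.real S * (t ^ p * ‖A x₁‖ ^ p) := by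
        rw [measureReal_def]; ring
    _ ≤ 2 * ∫ x in S, ‖A x‖ ^ p := hcheb

end

theorem stmt_5_general (n m : ℕ) (p : ℝ) (hp : 1 ≤ p)
    (lam : ℝ) (hlam : lam ∈ Set.Ioc (0 : ℝ) 1) :
    ∃ C : ℝ, ∀ (A : EuclideanSpace ℝ (Fin n) →ᵃ[ℝ] EuclideanSpace ℝ (Fin m))
      (x₀ : EuclideanSpace ℝ (Fin n)) (h : ℝ), 0 < h →
      ∀ S : Set (EuclideanSpace ℝ (Fin n)), MeasurableSet S →
        S ⊆ {x | ∀ i, |x i - x₀ i| < h / 2} →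
        lam * h ^ n ≤ (volume S).toReal →
        (volume S).toReal *
            (sSup ((fun x => ‖A x‖) '' {x : EuclideanSpace ℝ (Fin n) | ∀ i, |x i - x₀ i| < h / 2})) ^ p
          ≤ C * ∫ x in S, ‖A x‖ ^ p := by
  obtain ⟨hlam0, hlam1⟩ := hlam
  set t := lam / (8 * (n + 1))
  have ht0 : 0 < t := by positivity
  have ht : t ≤ 1 / 2 := by
    rw [div_le_iff₀ (by positivity)]
    nlinarith
  have hnt : 8 * n * t ≤ lam := by
    rw [mul_div_assoc', div_le_iff₀ (by positivity)]
    nlinarith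
  refine ⟨2 / t ^ p, fun A x₀ h hh S hS hSQ hSvol => ?_⟩
  have hS0 : 0 < (volume S).toReal := (by positivity : 0 < lam * h ^ n).trans_le hSvol
  have hSvol' : 8 * Fintype.card (Fin n) * t * h ^ Fintype.card (Fin n) ≤ (volume S).toReal := by
    rw [Fintype.card_fin]
    exact (mul_le_mul_of_nonneg_right hnt (by positivity)).trans hSvol
  rw [mul_comm, ← le_div_iff₀ hS0]
  refine Real.sSup_rpow_le (Set.Nonempty.image _ ⟨x₀, fun i => by simp [hh]⟩)
    (forall_mem_image.2 fun _ _ => norm_nonneg _) (by linarith)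
    (forall_mem_image.2 fun x₁ hx₁ => ?_)
  rw [le_div_iff₀ hS0, mul_comm]
  exact A.measureReal_mul_norm_rpow_le_setIntegral (by linarith) ht0 ht hS hSQ hSvol' hx₁

/-- For `n, m ≥ 1`, `p ∈ [1, ∞)` and `λ ∈ (0, 1]` there is a constant `C`
depending only on `n, p, λ` such that for every affine map `A : ℝⁿ → ℝᵐ`, every cube
`Q_h(x*)` and every measurable `S ⊆ Q_h(x*)` with `|S| ≥ λ hⁿ`:
`|S| (sup_{Q_h(x*)} |A|)^p ≤ C ∫_S |A|^p`. -/
theorem stmt_5 (n m : ℕ) (hn : 1 ≤ n) (hm : 1 ≤ m) (p : ℝ) (hp : 1 ≤ p)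
    (lam : ℝ) (hlam : lam ∈ Set.Ioc (0 : ℝ) 1) :
    ∃ C : ℝ, ∀ (A : EuclideanSpace ℝ (Fin n) →ᵃ[ℝ] EuclideanSpace ℝ (Fin m))
      (x₀ : EuclideanSpace ℝ (Fin n)) (h : ℝ), 0 < h →
      ∀ S : Set (EuclideanSpace ℝ (Fin n)), MeasurableSet S →
        S ⊆ {x | ∀ i, |x i - x₀ i| < h / 2} →
        lam * h ^ n ≤ (volume S).toReal →
        (volume S).toReal *
            (sSup ((fun x => ‖A x‖) '' {x : EuclideanSpace ℝ (Fin n) | ∀ i, |x i - x₀ i| < h / 2})) ^ p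
          ≤ C * ∫ x in S, ‖A x‖ ^ p :=
  stmt_5_general n m p hp lam hlam
end

section
/- Let K ≥ 0, L ≥ 0, and let f: (0, ∞) → [0, ∞) be a measurable function with f(s) ≤ K s for all s > 0 and lim_{s→0⁺} f(s)/(2s) = L. Let (δ_ε)_{ε>0} be positive real numbers such that δ_ε/ε → ℓ ∈ [0, ∞) as ε → 0⁺. Then lim_{ε→0⁺} [ (1/(2ε²)) ∫_{δ_ε}^∞ e^{−(s−δ_ε)/ε} f(s) ds − f(δ_ε)/(4ε) ] = (1 + ℓ/2) L. -/
/-!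
The substitution `s = δ_ε + ε t` turns the bulk term into
`(1/2) ∫₀^∞ e^{-t} f(δ_ε + ε t) / ε dt`. Since `f(δ_ε + ε t) / ε = (δ_ε/ε + t) · f(s)/s`, the
integrand tends to `2 L (ℓ + t) e^{-t}` and is dominated by `K (ℓ + 1 + t) e^{-t}`, so the bulk
term tends to `L (ℓ + 1)`, while the boundary term `f(δ_ε)/(4ε)` tends to `L ℓ / 2`.
-/

open MeasureTheory Filter Set Topology Real

theorem integrableOn_exp_neg_Ioi_zero : IntegrableOn (fun t => exp (-t)) (Ioi 0) := by
  simpa using exp_neg_integrableOn_Ioi 0 one_pos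

theorem integrableOn_exp_neg_mul_self_Ioi : IntegrableOn (fun t => exp (-t) * t) (Ioi 0) := by
  simpa [one_add_one_eq_two.symm] using GammaIntegral_convergent (s := 2) two_pos

theorem integral_exp_neg_mul_self_Ioi : ∫ t in Ioi 0, exp (-t) * t = 1 := by
  have h := Gamma_eq_integral (s := 2) two_pos
  norm_num [Gamma_two] at h
  exact h.symm

theorem integrableOn_exp_neg_mul_add_Ioi (c : ℝ) :
    IntegrableOn (fun t => exp (-t) * (c + t)) (Ioi 0) := by
  simp only [mul_add]
  exact (integrableOn_exp_neg_Ioi_zero.mul_const c).add integrableOn_exp_neg_mul_self_Ioi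

theorem integral_exp_neg_mul_add_Ioi (c : ℝ) : ∫ t in Ioi 0, exp (-t) * (c + t) = c + 1 := by
  simp only [mul_add]
  rw [integral_add (integrableOn_exp_neg_Ioi_zero.mul_const c) integrableOn_exp_neg_mul_self_Ioi,
    integral_mul_const, integral_exp_neg_Ioi_zero, integral_exp_neg_mul_self_Ioi, one_mul]

theorem setIntegral_Ioi_eq_mul_setIntegral_Ioi_comp_affine (g : ℝ → ℝ) (a : ℝ) {c : ℝ}
    (hc : 0 < c) : ∫ s in Ioi a, g s = c * ∫ t in Ioi 0, g (a + c * t) := by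
  have htranslate : ∫ x in Ioi 0, g (a + x) = ∫ s in Ioi a, g s := by
    simpa [preimage_const_add_Ioi] using
      (measurePreserving_add_left volume a).setIntegral_preimage_emb
        (measurableEmbedding_addLeft a) g (Ioi a)
  rw [integral_comp_mul_left_Ioi (fun x => g (a + x)) 0 hc, mul_zero, htranslate, smul_eq_mul,
    mul_inv_cancel_left₀ hc.ne']

theorem tendsto_nhdsGT_zero_of_tendsto_div {u : ℝ → ℝ} {m : ℝ}
    (hpos : ∀ᶠ ε in 𝓝[>] 0, 0 < u ε) (hu : Tendsto (fun ε => u ε / ε) (𝓝[>] 0) (𝓝 m)) :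
    Tendsto u (𝓝[>] 0) (𝓝[>] 0) := by
  refine tendsto_nhdsWithin_iff.mpr ⟨?_, hpos⟩
  have h := hu.mul (tendsto_nhdsWithin_of_tendsto_nhds tendsto_id)
  rw [mul_zero] at h
  refine h.congr' ?_
  filter_upwards [self_mem_nhdsWithin] with ε (hε : 0 < ε)
  exact div_mul_cancel₀ _ hε.ne'

theorem tendsto_comp_div_of_tendsto_div_two_mul {f u : ℝ → ℝ} {L m : ℝ}
    (hfL : Tendsto (fun s => f s / (2 * s)) (𝓝[>] 0) (𝓝 L))
    (hpos : ∀ᶠ ε in 𝓝[>] 0, 0 < u ε) (hu : Tendsto (fun ε => u ε / ε) (𝓝[>] 0) (𝓝 m)) :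
    Tendsto (fun ε => f (u ε) / ε) (𝓝[>] 0) (𝓝 (2 * L * m)) := by
  have h := ((hfL.comp (tendsto_nhdsGT_zero_of_tendsto_div hpos hu)).const_mul 2).mul hu
  refine h.congr' ?_
  filter_upwards [hpos] with ε hε
  simp only [Function.comp_apply]
  field_simp

theorem tendsto_integral_exp_neg_mul_comp_affine_div {f δ : ℝ → ℝ} {K L ℓ : ℝ}
    (hfmeas : Measurable f) (hf0 : ∀ s, 0 < s → 0 ≤ f s) (hfK : ∀ s, 0 < s → f s ≤ K * s)
    (hK : 0 ≤ K) (hfL : Tendsto (fun s => f s / (2 * s)) (𝓝[>] 0) (𝓝 L))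
    (hδ : ∀ᶠ ε in 𝓝[>] 0, 0 < δ ε) (hδℓ : Tendsto (fun ε => δ ε / ε) (𝓝[>] 0) (𝓝 ℓ)) :
    Tendsto (fun ε => ∫ t in Ioi 0, exp (-t) * (f (δ ε + ε * t) / ε)) (𝓝[>] 0)
      (𝓝 (2 * L * (ℓ + 1))) := by
  have hlimit : ∫ t in Ioi 0, exp (-t) * (2 * L * (ℓ + t)) = 2 * L * (ℓ + 1) := by
    simp_rw [mul_left_comm (exp _)]
    rw [integral_const_mul, integral_exp_neg_mul_add_Ioi]
  rw [← hlimit]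
  refine tendsto_integral_filter_of_dominated_convergence (fun t => K * (exp (-t) * (ℓ + 1 + t)))
    (Eventually.of_forall fun ε => by fun_prop) ?_
    ((integrableOn_exp_neg_mul_add_Ioi (ℓ + 1)).const_mul K) ?_
  · filter_upwards [self_mem_nhdsWithin, hδ, hδℓ.eventually_lt_const (lt_add_one ℓ)]
      with ε (hε : 0 < ε) hδε hδℓε
    refine (ae_restrict_iff' measurableSet_Ioi).mpr (Eventually.of_forall fun t (ht : 0 < t) => ?_)
    have hs : 0 < δ ε + ε * t := by positivity
    have hfs : f (δ ε + ε * t) / ε ≤ K * (ℓ + 1 + t) := by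
      rw [div_le_iff₀ hε]
      calc f (δ ε + ε * t) ≤ K * (δ ε + ε * t) := hfK _ hs
        _ ≤ K * ((ℓ + 1 + t) * ε) := by
          gcongr
          nlinarith [(div_lt_iff₀ hε).mp hδℓε]
        _ = _ := by ring
    rw [norm_mul, norm_of_nonneg (exp_pos _).le, norm_of_nonneg (div_nonneg (hf0 _ hs) hε.le),
      mul_left_comm]
    exact mul_le_mul_of_nonneg_left hfs (exp_pos _).le
  · refine (ae_restrict_iff' measurableSet_Ioi).mpr (Eventually.of_forall fun t (ht : 0 < t) => ?_)
    refine (tendsto_comp_div_of_tendsto_div_two_mul hfL ?_ ?_).const_mul (exp (-t))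
    · filter_upwards [self_mem_nhdsWithin, hδ] with ε (hε : 0 < ε) hδε
      positivity
    · refine (hδℓ.add_const t).congr' ?_
      filter_upwards [self_mem_nhdsWithin] with ε (hε : 0 < ε)
      field_simp

theorem stmt_15_general (K L : ℝ) (hK : 0 ≤ K)
    (f : ℝ → ℝ) (hfmeas : Measurable f)
    (hf0 : ∀ s : ℝ, 0 < s → 0 ≤ f s) (hfK : ∀ s : ℝ, 0 < s → f s ≤ K * s)
    (hfL : Tendsto (fun s => f s / (2 * s)) (nhdsWithin 0 (Set.Ioi 0)) (nhds L))
    (δ : ℝ → ℝ) (hδ : ∀ ε : ℝ, 0 < ε → 0 < δ ε)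
    (ℓ : ℝ)
    (hδℓ : Tendsto (fun ε => δ ε / ε) (nhdsWithin 0 (Set.Ioi 0)) (nhds ℓ)) :
    Tendsto
      (fun ε =>
        1 / (2 * ε ^ 2) * (∫ s in Set.Ioi (δ ε), Real.exp (-(s - δ ε) / ε) * f s) -
          f (δ ε) / (4 * ε))
      (nhdsWithin 0 (Set.Ioi 0)) (nhds ((1 + ℓ / 2) * L)) := by
  have hδpos : ∀ᶠ ε in 𝓝[>] 0, 0 < δ ε := eventually_nhdsWithin_of_forall hδ
  have hbulk := (tendsto_integral_exp_neg_mul_comp_affine_div hfmeas hf0 hfK hK hfL hδpos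
    hδℓ).const_mul (1 / 2)
  have hboundary := (tendsto_comp_div_of_tendsto_div_two_mul hfL hδpos hδℓ).div_const 4
  have hlim := hbulk.sub hboundary
  rw [show 1 / 2 * (2 * L * (ℓ + 1)) - 2 * L * ℓ / 4 = (1 + ℓ / 2) * L by ring] at hlim
  refine hlim.congr' ?_
  filter_upwards [self_mem_nhdsWithin] with ε (hε : 0 < ε)
  rw [setIntegral_Ioi_eq_mul_setIntegral_Ioi_comp_affine _ (δ ε) hε]
  simp_rw [add_sub_cancel_left, neg_div, mul_div_cancel_left₀ _ hε.ne', ← mul_div_assoc,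
    integral_div]
  generalize ∫ t in Ioi 0, exp (-t) * f (δ ε + ε * t) = I
  field_simp

/-- Let `f : (0,∞) → [0,∞)` be measurable with `f(s) ≤ K s` and
`f(s)/(2s) → L` as `s → 0⁺`, and let `δ_ε > 0` with `δ_ε/ε → ℓ ≥ 0` as `ε → 0⁺`. Then
`(1/(2ε²)) ∫_{δ_ε}^∞ e^{−(s−δ_ε)/ε} f(s) ds − f(δ_ε)/(4ε) → (1 + ℓ/2) L` as `ε → 0⁺`. -/
theorem stmt_15 (K L : ℝ) (hK : 0 ≤ K) (hL : 0 ≤ L)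
    (f : ℝ → ℝ) (hfmeas : Measurable f)
    (hf0 : ∀ s : ℝ, 0 < s → 0 ≤ f s) (hfK : ∀ s : ℝ, 0 < s → f s ≤ K * s)
    (hfL : Tendsto (fun s => f s / (2 * s)) (nhdsWithin 0 (Set.Ioi 0)) (nhds L))
    (δ : ℝ → ℝ) (hδ : ∀ ε : ℝ, 0 < ε → 0 < δ ε)
    (ℓ : ℝ) (hℓ : 0 ≤ ℓ)
    (hδℓ : Tendsto (fun ε => δ ε / ε) (nhdsWithin 0 (Set.Ioi 0)) (nhds ℓ)) :
    Tendsto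
      (fun ε =>
        1 / (2 * ε ^ 2) * (∫ s in Set.Ioi (δ ε), Real.exp (-(s - δ ε) / ε) * f s) -
          f (δ ε) / (4 * ε))
      (nhdsWithin 0 (Set.Ioi 0)) (nhds ((1 + ℓ / 2) * L)) :=
  stmt_15_general K L hK f hfmeas hf0 hfK hfL δ hδ ℓ hδℓ
end

section
/- Let n ≥ 1 and K ≥ 0. There exists a constant C, depending only on n and K, such that for every ε > 0 and every R₀ ∈ [0, Kε], the function h: ℝⁿ → [0, ∞) defined by h(x) := 1/(4ε) if |x| ≤ R₀ and h(x) := (1/(2ε)) e^{−(|x|−R₀)/ε} if |x| > R₀ satisfies ∫_{ℝⁿ} h(x) dx ≤ C ε^{n−1}. -/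
open MeasureTheory

lemma stmt16_exp_bound (m : ℕ) (hm : 1 ≤ m) (t : ℝ) (ht : 0 ≤ t) :
    Real.exp (-t) ≤ (m : ℝ) ^ m * (1 + t) ^ (-(m : ℝ)) := by
  have h1t : (0:ℝ) < 1 + t := by linarith
  have hm' : (1:ℝ) ≤ m := by exact_mod_cast hm
  have key : (1 + t) ^ m ≤ (m : ℝ) ^ m * Real.exp t := by
    have h1 : 1 + t ≤ (m : ℝ) * Real.exp (t / m) := by
      have := Real.add_one_le_exp (t / m)
      have hmpos : (0:ℝ) < m := by linarith
      have : (m : ℝ) * (t / m + 1) ≤ (m : ℝ) * Real.exp (t / m) :=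
        mul_le_mul_of_nonneg_left this (le_of_lt hmpos)
      calc 1 + t ≤ (m : ℝ) + t := by linarith
        _ = (m : ℝ) * (t / m + 1) := by field_simp; ring
        _ ≤ (m : ℝ) * Real.exp (t / m) := this
    calc (1 + t) ^ m ≤ ((m : ℝ) * Real.exp (t / m)) ^ m := by
          apply pow_le_pow_left₀ h1t.le h1
      _ = (m : ℝ) ^ m * (Real.exp (t / m)) ^ m := mul_pow _ _ _
      _ = (m : ℝ) ^ m * Real.exp t := by
          rw [← Real.exp_nat_mul]
          congr 1
          have hmpos : (0:ℝ) < m := by linarith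
          field_simp
  have hrw : (1 + t) ^ (-(m : ℝ)) = ((1 + t) ^ m)⁻¹ := by
    rw [Real.rpow_neg h1t.le, Real.rpow_natCast]
  rw [hrw, Real.exp_neg]
  have h2 : (0:ℝ) < (1 + t) ^ m := pow_pos h1t m
  have h3 : (0:ℝ) < Real.exp t := Real.exp_pos t
  have h5 : (Real.exp t)⁻¹ * (1 + t) ^ m ≤ (Real.exp t)⁻¹ * ((m : ℝ) ^ m * Real.exp t) :=
    mul_le_mul_of_nonneg_left key (inv_nonneg.2 h3.le)
  have h6 : (Real.exp t)⁻¹ * ((m : ℝ) ^ m * Real.exp t) = (m : ℝ) ^ m := by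
    field_simp
  calc (Real.exp t)⁻¹ = (Real.exp t)⁻¹ * (1 + t) ^ m * ((1 + t) ^ m)⁻¹ := by
        field_simp
    _ ≤ (m : ℝ) ^ m * ((1 + t) ^ m)⁻¹ := by
        apply mul_le_mul_of_nonneg_right _ (inv_nonneg.2 h2.le)
        rw [← h6]; exact h5

lemma stmt16_integrable (n : ℕ) :
    Integrable (fun x : EuclideanSpace ℝ (Fin n) => Real.exp (-‖x‖)) := by
  have hdim : (Module.finrank ℝ (EuclideanSpace ℝ (Fin n)) : ℝ) < ((n + 1 : ℕ) : ℝ) := by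
    rw [finrank_euclideanSpace_fin]; exact_mod_cast Nat.lt_succ_self n
  have hint := (integrable_one_add_norm (E := EuclideanSpace ℝ (Fin n))
    (μ := volume) hdim).const_mul (((n + 1 : ℕ) : ℝ) ^ (n + 1))
  refine hint.mono' ?_ ?_
  · exact (Real.continuous_exp.comp continuous_norm.neg).aestronglyMeasurable
  · filter_upwards with x
    rw [Real.norm_eq_abs, abs_of_nonneg (Real.exp_nonneg _)]
    exact stmt16_exp_bound (n + 1) (Nat.le_add_left 1 n) ‖x‖ (norm_nonneg x)

/-- For `n ≥ 1` and `K ≥ 0` there is a constant `C = C(n, K)` such that for all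
`ε > 0` and `R₀ ∈ [0, Kε]`, the radial Ambrosio–Tortorelli energy density
`h(x) = 1/(4ε)` for `|x| ≤ R₀` and `h(x) = (1/(2ε)) e^{−(|x|−R₀)/ε}` for `|x| > R₀`
satisfies `∫_{ℝⁿ} h ≤ C ε^{n−1}`. -/
theorem stmt_16 (n : ℕ) (hn : 1 ≤ n) (K : ℝ) (hK : 0 ≤ K) :
    ∃ C : ℝ, 0 < C ∧ ∀ ε : ℝ, 0 < ε → ∀ R₀ : ℝ, 0 ≤ R₀ → R₀ ≤ K * ε →
      ∫⁻ x : EuclideanSpace ℝ (Fin n),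
          ENNReal.ofReal
            (if ‖x‖ ≤ R₀ then 1 / (4 * ε)
             else 1 / (2 * ε) * Real.exp (-(‖x‖ - R₀) / ε)) ≤
        ENNReal.ofReal (C * ε ^ (n - 1)) := by
  set E := EuclideanSpace ℝ (Fin n)
  have hf : Integrable (fun x : E => Real.exp (-‖x‖)) := stmt16_integrable n
  set J : ℝ := ∫ x : E, Real.exp (-‖x‖) with hJ
  have hJ0 : 0 ≤ J := integral_nonneg fun x => (Real.exp_pos _).le
  refine ⟨Real.exp K * J / 2 + 1, by positivity, ?_⟩
  intro ε hε R₀ hR₀ hR₀K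
  -- the dominating function
  set g : E → ℝ := fun x => Real.exp K / (2 * ε) * Real.exp (-‖ε⁻¹ • x‖) with hg
  have hg_eq : ∀ x : E, g x = Real.exp K / (2 * ε) * Real.exp (-(‖x‖ / ε)) := by
    intro x
    simp only [hg, norm_smul, norm_inv, Real.norm_eq_abs, abs_of_pos hε]
    rw [inv_mul_eq_div]
  have hgint : Integrable g :=
    (hf.comp_smul (inv_ne_zero hε.ne')).const_mul _
  have hg_nn : ∀ x : E, 0 ≤ g x := fun x => by
    rw [hg_eq]; positivity
  -- pointwise bound
  have hptwise : ∀ x : E,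
      (if ‖x‖ ≤ R₀ then 1 / (4 * ε)
       else 1 / (2 * ε) * Real.exp (-(‖x‖ - R₀) / ε)) ≤ g x := by
    intro x
    rw [hg_eq]
    split_ifs with h
    · have h1 : ‖x‖ / ε ≤ K := by
        rw [div_le_iff₀ hε]; linarith
      have h2 : (1:ℝ) ≤ Real.exp K * Real.exp (-(‖x‖ / ε)) := by
        rw [← Real.exp_add]
        apply Real.one_le_exp; linarith
      rw [div_mul_eq_mul_div, one_div, ← mul_one (4 * ε)⁻¹]
      calc (4 * ε)⁻¹ * 1 ≤ (2 * ε)⁻¹ * 1 := by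
            apply mul_le_mul_of_nonneg_right _ zero_le_one
            apply inv_anti₀ (by linarith) (by linarith)
        _ ≤ (2 * ε)⁻¹ * (Real.exp K * Real.exp (-(‖x‖ / ε))) := by
            apply mul_le_mul_of_nonneg_left h2 (by positivity)
        _ = Real.exp K * Real.exp (-(‖x‖ / ε)) / (2 * ε) := by ring
    · have h1 : R₀ / ε ≤ K := by
        rw [div_le_iff₀ hε]; linarith
      have h2 : Real.exp (-(‖x‖ - R₀) / ε) ≤ Real.exp K * Real.exp (-(‖x‖ / ε)) := by
        rw [← Real.exp_add]
        apply Real.exp_le_exp.2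
        have : -(‖x‖ - R₀) / ε = R₀ / ε - ‖x‖ / ε := by ring
        rw [this]; linarith
      calc 1 / (2 * ε) * Real.exp (-(‖x‖ - R₀) / ε)
          ≤ 1 / (2 * ε) * (Real.exp K * Real.exp (-(‖x‖ / ε))) := by
            apply mul_le_mul_of_nonneg_left h2 (by positivity)
        _ = Real.exp K / (2 * ε) * Real.exp (-(‖x‖ / ε)) := by ring
  -- value of the integral of g
  have hgval : ∫ x : E, g x = Real.exp K * J / 2 * ε ^ (n - 1) := by
    have hd : Module.finrank ℝ E = n := finrank_euclideanSpace_fin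
    have h1 : ∫ x : E, Real.exp (-‖ε⁻¹ • x‖) = ε ^ n * J := by
      have := Measure.integral_comp_smul_of_nonneg (μ := volume)
        (fun x : E => Real.exp (-‖x‖)) ε⁻¹ (hR := inv_nonneg.2 hε.le)
      rw [this, hd, smul_eq_mul, ← inv_pow, inv_inv]
    rw [hg, integral_const_mul, h1]
    obtain ⟨m, rfl⟩ : ∃ m, n = m + 1 := ⟨n - 1, (Nat.succ_pred_eq_of_pos hn).symm⟩
    simp only [Nat.add_sub_cancel]
    rw [pow_succ]
    field_simp
  calc ∫⁻ x : E, ENNReal.ofReal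
          (if ‖x‖ ≤ R₀ then 1 / (4 * ε)
           else 1 / (2 * ε) * Real.exp (-(‖x‖ - R₀) / ε))
      ≤ ∫⁻ x : E, ENNReal.ofReal (g x) :=
        lintegral_mono fun x => ENNReal.ofReal_le_ofReal (hptwise x)
    _ = ENNReal.ofReal (∫ x : E, g x) :=
        (ofReal_integral_eq_lintegral_ofReal hgint
          (Filter.Eventually.of_forall hg_nn)).symm
    _ ≤ ENNReal.ofReal ((Real.exp K * J / 2 + 1) * ε ^ (n - 1)) := by
        apply ENNReal.ofReal_le_ofReal
        rw [hgval]
        have : (0:ℝ) ≤ ε ^ (n - 1) := by positivity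
        nlinarith
end
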